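/- arXiv:math/9811129 — 5 statements merged into one kernel-verified Lean document; each statement's English description precedes it below -/
import Mathlib

section
/- For pairwise distinct indices p, q, r in {1,...,n}, the rational functions φ_{pq}(u,v) = 1 - (p,q)/(u-v) with values in the group algebra of the symmetric group S_n satisfy the Yang–Baxter equation φ_{pq}(u,v)·φ_{pr}(u,w)·φ_{qr}(v,w) = φ_{qr}(v,w)·φ_{pr}(u,w)·φ_{pq}(u,v). -/
/-- The rational function `φ_{pq}(u,v) = 1 - (p,q)/(u-v)` with values in the
complex group algebra of the symmetric group `S_n`. -/
noncomputable def phiFn (n : ℕ) (p q : Fin n) (u v : ℂ) :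
    MonoidAlgebra ℂ (Equiv.Perm (Fin n)) :=
  1 - (u - v)⁻¹ • (MonoidAlgebra.of ℂ (Equiv.Perm (Fin n)) (Equiv.swap p q))

section aux

set_option maxHeartbeats 1000000 in
set_option linter.unreachableTactic false in
set_option linter.unusedTactic false in
lemma yb_aux {R : Type*} [Ring R] [Algebra ℂ R] (a b c : ℂ) (S T K : R)
    (h1 : S * T = K * S) (h2 : S * T = T * K) (h3 : T * S = S * K) (h4 : T * S = K * T)
    (h5 : S * T * K = K * T * S) (hsum : a * b + b * c = a * c) :
    (1 - a • S) * (1 - b • T) * (1 - c • K) = (1 - c • K) * (1 - b • T) * (1 - a • S) := by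
  simp only [mul_sub, sub_mul, mul_one, one_mul, smul_sub, smul_mul_assoc,
    mul_smul_comm, smul_smul]
  rw [← h5, ← h1, ← h2, ← h3, ← h4]
  match_scalars <;>
    first
      | ring1
      | linear_combination hsum
      | linear_combination -hsum
      | linear_combination (2 : ℂ) * hsum
      | linear_combination (-2 : ℂ) * hsum

variable {α : Type*} [DecidableEq α]

lemma swap_aux1 {p q r : α} (hpq : p ≠ q) (hpr : p ≠ r) (hqr : q ≠ r) :
    Equiv.swap p q * Equiv.swap p r = Equiv.swap q r * Equiv.swap p q := by
  ext x
  simp only [Equiv.Perm.mul_apply, Equiv.swap_apply_def]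
  split_ifs <;> simp_all

lemma swap_aux2 {p q r : α} (hpq : p ≠ q) (hpr : p ≠ r) (hqr : q ≠ r) :
    Equiv.swap p q * Equiv.swap p r = Equiv.swap p r * Equiv.swap q r := by
  ext x
  simp only [Equiv.Perm.mul_apply, Equiv.swap_apply_def]
  split_ifs <;> simp_all

lemma swap_aux3 {p q r : α} (hpq : p ≠ q) (hpr : p ≠ r) (hqr : q ≠ r) :
    Equiv.swap p r * Equiv.swap p q = Equiv.swap p q * Equiv.swap q r := by
  ext x
  simp only [Equiv.Perm.mul_apply, Equiv.swap_apply_def]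
  split_ifs <;> simp_all

lemma swap_aux4 {p q r : α} (hpq : p ≠ q) (hpr : p ≠ r) (hqr : q ≠ r) :
    Equiv.swap p r * Equiv.swap p q = Equiv.swap q r * Equiv.swap p r := by
  ext x
  simp only [Equiv.Perm.mul_apply, Equiv.swap_apply_def]
  split_ifs <;> simp_all

lemma swap_aux5 {p q r : α} (hpq : p ≠ q) (hpr : p ≠ r) (hqr : q ≠ r) :
    Equiv.swap p q * Equiv.swap p r * Equiv.swap q r =
      Equiv.swap q r * Equiv.swap p r * Equiv.swap p q := by
  ext x
  simp only [Equiv.Perm.mul_apply, Equiv.swap_apply_def]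
  split_ifs <;> simp_all

end aux

/-- **Yang–Baxter equation** for the functions `φ_{pq}`. -/
theorem yang_baxter_phi (n : ℕ) (p q r : Fin n)
    (hpq : p ≠ q) (hpr : p ≠ r) (hqr : q ≠ r)
    (u v w : ℂ) (huv : u ≠ v) (huw : u ≠ w) (hvw : v ≠ w) :
    phiFn n p q u v * phiFn n p r u w * phiFn n q r v w =
      phiFn n q r v w * phiFn n p r u w * phiFn n p q u v := by
  unfold phiFn
  set F := MonoidAlgebra.of ℂ (Equiv.Perm (Fin n)) with hF
  have huv' : u - v ≠ 0 := sub_ne_zero.mpr huv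
  have huw' : u - w ≠ 0 := sub_ne_zero.mpr huw
  have hvw' : v - w ≠ 0 := sub_ne_zero.mpr hvw
  refine yb_aux _ _ _ _ _ _ ?_ ?_ ?_ ?_ ?_ ?_
  · rw [← map_mul, ← map_mul, swap_aux1 hpq hpr hqr]
  · rw [← map_mul, ← map_mul, swap_aux2 hpq hpr hqr]
  · rw [← map_mul, ← map_mul, swap_aux3 hpq hpr hqr]
  · rw [← map_mul, ← map_mul, swap_aux4 hpq hpr hqr]
  · rw [← map_mul, ← map_mul, ← map_mul, ← map_mul, swap_aux5 hpq hpr hqr]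
  · field_simp
    ring
end

section
/- If v = w + 1 or v = w - 1, then the rational function φ_{pq}(u,v)·φ_{pr}(u,w)·φ_{qr}(v,w) of u, which a priori has a pole at u = w coming from the factor φ_{pr}(u,w), is in fact regular at u = w; explicitly, under the condition v = w ± 1 it equals (1 - ((p,q)+(p,r))/(u - w ∓ 1))·(1 ∓ (q,r)). -/
/-- If `v = w ± 1` then the product `φ_{pq}(u,v)·φ_{pr}(u,w)·φ_{qr}(v,w)`, which a priori
has a pole at `u = w`, equals `(1 - ((p,q)+(p,r))/(u-w∓1))·(1 ∓ (q,r))`, an expression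
which is manifestly regular at `u = w`.  (The sign `ε = ±1` records the two cases.) -/
theorem phi_triple_regular (n : ℕ) (p q r : Fin n)
    (hpq : p ≠ q) (hpr : p ≠ r) (hqr : q ≠ r)
    (ε : ℂ) (hε : ε = 1 ∨ ε = -1) (u v w : ℂ) (hv : v = w + ε)
    (huv : u ≠ v) (huw : u ≠ w) :
    phiFn n p q u v * phiFn n p r u w * phiFn n q r v w =
      (1 - (u - w - ε)⁻¹ •
          (MonoidAlgebra.of ℂ (Equiv.Perm (Fin n)) (Equiv.swap p q) +
           MonoidAlgebra.of ℂ (Equiv.Perm (Fin n)) (Equiv.swap p r))) *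
        (1 - ε • MonoidAlgebra.of ℂ (Equiv.Perm (Fin n)) (Equiv.swap q r)) := by
  subst hv
  have h2 : u - w ≠ 0 := sub_ne_zero.mpr huw
  have key : Equiv.swap p r * Equiv.swap q p * Equiv.swap p r = Equiv.swap r q :=
    Equiv.swap_mul_swap_mul_swap hpq.symm hqr
  have hbc : Equiv.swap p r * Equiv.swap q r = Equiv.swap p q * Equiv.swap p r := by
    rw [Equiv.swap_comm q r, ← key, ← mul_assoc, ← mul_assoc, Equiv.swap_mul_self,
      one_mul, Equiv.swap_comm q p]
  have habc : Equiv.swap p q * Equiv.swap p r * Equiv.swap q r = Equiv.swap p r := by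
    rw [mul_assoc, hbc, ← mul_assoc, Equiv.swap_mul_self, one_mul]
  unfold phiFn
  rcases hε with h | h <;> subst h
  · have hE : u - (w + 1) ≠ 0 := sub_ne_zero.mpr huv
    have hF : u - w - 1 ≠ 0 := fun h => huv (by linear_combination h)
    simp only [mul_sub, sub_mul, add_mul, one_mul, mul_one, smul_mul_assoc,
      mul_smul_comm, smul_smul, smul_add, ← map_mul, mul_assoc, hbc, habc]
    match_scalars <;> field_simp [hE, hF, h2] <;> ring
  · have hK : u - w + 1 ≠ 0 := fun h => huv (by linear_combination h)
    have e1 : u - (w + -1) = u - w + 1 := by ring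
    have e2 : (w + -1 - w : ℂ) = -1 := by ring
    have e3 : u - w - -1 = u - w + 1 := by ring
    simp only [mul_sub, sub_mul, add_mul, one_mul, mul_one, smul_mul_assoc,
      mul_smul_comm, smul_smul, smul_add, ← map_mul, mul_assoc, hbc, habc,
      e1, e2, e3]
    match_scalars <;> field_simp [hK, h2] <;> ring
end

section
/- For any standard tableau T of shape ν (a partition of n) and any p ∈ {1,...,n}, the Jucys–Murphy element z_p acts on the Young basis vector w_T of the irreducible S_n-module W_ν as multiplication by the content c_p = k - l, where p occupies the box in column k and row l of T. -/
open MonoidAlgebra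

/-- A standard tableau with `n` boxes: an injective assignment of positions
(row, column) to the entries `1,…,n` (represented by `Fin n`), whose image is a
Young diagram, with entries increasing along rows and down columns. -/
structure StdTableau (n : ℕ) where
  pos : Fin n → ℕ × ℕ
  inj : Function.Injective pos
  lowerSet : ∀ p : Fin n, ∀ i j : ℕ, i ≤ (pos p).1 → j ≤ (pos p).2 →
    ∃ q : Fin n, pos q = (i, j)
  rowInc : ∀ p q : Fin n, (pos p).1 = (pos q).1 → (pos p).2 < (pos q).2 → p < q
  colInc : ∀ p q : Fin n, (pos p).2 = (pos q).2 → (pos p).1 < (pos q).1 → p < q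

/-- The content `c_p = (column) - (row)` of the box occupied by `p`. -/
def StdTableau.content {n : ℕ} (T : StdTableau n) (p : Fin n) : ℤ :=
  ((T.pos p).2 : ℤ) - ((T.pos p).1 : ℤ)

/-- The Young symmetrizer (column antisymmetrizer times row symmetrizer) of the
restriction of the tableau `T` to the entries `1,…,p`, inside `ℂ·S_n`. -/
noncomputable def StdTableau.symmetrizer {n : ℕ} (T : StdTableau n) (p : Fin n) :
    MonoidAlgebra ℂ (Equiv.Perm (Fin n)) :=
  (∑ σ ∈ Finset.univ.filter (fun σ : Equiv.Perm (Fin n) =>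
      (∀ q, p < q → σ q = q) ∧ ∀ q, (T.pos (σ q)).2 = (T.pos q).2),
    ((Equiv.Perm.sign σ : ℤ) : ℂ) • MonoidAlgebra.of ℂ (Equiv.Perm (Fin n)) σ) *
  (∑ σ ∈ Finset.univ.filter (fun σ : Equiv.Perm (Fin n) =>
      (∀ q, p < q → σ q = q) ∧ ∀ q, (T.pos (σ q)).1 = (T.pos q).1),
    MonoidAlgebra.of ℂ (Equiv.Perm (Fin n)) σ)

namespace JM

open Finset Equiv Equiv.Perm

variable {n : ℕ} (T : StdTableau n)

/-- entries are ordered along the componentwise order of positions -/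
lemma entry_le {q r : Fin n} (h1 : (T.pos q).1 ≤ (T.pos r).1)
    (h2 : (T.pos q).2 ≤ (T.pos r).2) : q ≤ r := by
  obtain ⟨s, hs⟩ := T.lowerSet r (T.pos q).1 (T.pos r).2 h1 le_rfl
  have hs1 : (T.pos s).1 = (T.pos q).1 := by rw [hs]
  have hs2 : (T.pos s).2 = (T.pos r).2 := by rw [hs]
  have hqs : q ≤ s := by
    rcases lt_or_eq_of_le (h2.trans hs2.ge) with h | h
    · exact (T.rowInc q s hs1.symm h).le
    · exact (T.inj (Prod.ext hs1.symm h)).le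
  have hsr : s ≤ r := by
    rcases lt_or_eq_of_le (hs1.le.trans h1) with h | h
    · exact (T.colInc s r hs2 h).le
    · exact (T.inj (Prod.ext h hs2)).le
  exact hqs.trans hsr

/-- the entry sitting at a box componentwise below the box of an entry `≤ p` is `≤ p`;
existence + bound packaged -/
lemma exists_entry_le {p r : Fin n} (hr : ¬ p < r) {i j : ℕ}
    (h1 : i ≤ (T.pos r).1) (h2 : j ≤ (T.pos r).2) :
    ∃ x : Fin n, ¬ p < x ∧ T.pos x = (i, j) := by
  obtain ⟨x, hx⟩ := T.lowerSet r i j h1 h2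
  refine ⟨x, fun hpx => hr ?_, hx⟩
  have : x ≤ r := entry_le T (by rw [hx]; exact h1) (by rw [hx]; exact h2)
  exact lt_of_lt_of_le hpx this

lemma entry_zero {p : Fin n} (hp : (p : ℕ) = 0) : T.pos p = (0, 0) := by
  have h0 : ∀ q : Fin n, ¬ q < p := by
    intro q hq; rw [Fin.lt_def, hp] at hq; omega
  have h1 : (T.pos p).1 = 0 := by
    by_contra h
    obtain ⟨q, hq⟩ := T.lowerSet p 0 (T.pos p).2 (Nat.zero_le _) le_rfl
    have : q < p := T.colInc q p (by rw [hq]) (by rw [hq]; omega)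
    exact h0 q this
  have h2 : (T.pos p).2 = 0 := by
    by_contra h
    obtain ⟨q, hq⟩ := T.lowerSet p (T.pos p).1 0 le_rfl (Nat.zero_le _)
    have : q < p := T.rowInc q p (by rw [hq]) (by rw [hq]; omega)
    exact h0 q this
  rw [Prod.ext_iff]; exact ⟨h1, h2⟩

variable (p : Fin n)

def Rset : Finset (Equiv.Perm (Fin n)) :=
  Finset.univ.filter (fun σ : Equiv.Perm (Fin n) =>
    (∀ q, p < q → σ q = q) ∧ ∀ q, (T.pos (σ q)).1 = (T.pos q).1)

def Cset : Finset (Equiv.Perm (Fin n)) :=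
  Finset.univ.filter (fun σ : Equiv.Perm (Fin n) =>
    (∀ q, p < q → σ q = q) ∧ ∀ q, (T.pos (σ q)).2 = (T.pos q).2)

lemma mem_Rset {σ : Equiv.Perm (Fin n)} :
    σ ∈ Rset T p ↔ (∀ q, p < q → σ q = q) ∧ ∀ q, (T.pos (σ q)).1 = (T.pos q).1 := by
  simp [Rset]

lemma mem_Cset {σ : Equiv.Perm (Fin n)} :
    σ ∈ Cset T p ↔ (∀ q, p < q → σ q = q) ∧ ∀ q, (T.pos (σ q)).2 = (T.pos q).2 := by
  simp [Cset]

lemma fix_inv {σ : Equiv.Perm (Fin n)} (h : ∀ q, p < q → σ q = q) :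
    ∀ q, p < q → σ⁻¹ q = q := by
  intro q hq
  have := h q hq
  conv_lhs => rw [← this]
  simp

lemma fix_le {σ : Equiv.Perm (Fin n)} (h : ∀ q, p < q → σ q = q) {q : Fin n}
    (hq : ¬ p < q) : ¬ p < σ q := by
  intro hc
  have := h (σ q) hc
  exact hq (σ.injective this ▸ hc)

lemma one_mem_Rset : 1 ∈ Rset T p := by simp [mem_Rset]

lemma one_mem_Cset : 1 ∈ Cset T p := by simp [mem_Cset]

lemma mul_mem_Rset {σ τ : Equiv.Perm (Fin n)} (hσ : σ ∈ Rset T p) (hτ : τ ∈ Rset T p) :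
    σ * τ ∈ Rset T p := by
  rw [mem_Rset] at *
  refine ⟨fun q hq => ?_, fun q => ?_⟩
  · simp [hτ.1 q hq, hσ.1 q hq]
  · simpa [hσ.2 (τ q)] using hτ.2 q

lemma mul_mem_Cset {σ τ : Equiv.Perm (Fin n)} (hσ : σ ∈ Cset T p) (hτ : τ ∈ Cset T p) :
    σ * τ ∈ Cset T p := by
  rw [mem_Cset] at *
  refine ⟨fun q hq => ?_, fun q => ?_⟩
  · simp [hτ.1 q hq, hσ.1 q hq]
  · simpa [hσ.2 (τ q)] using hτ.2 q

lemma inv_mem_Rset {σ : Equiv.Perm (Fin n)} (hσ : σ ∈ Rset T p) : σ⁻¹ ∈ Rset T p := by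
  rw [mem_Rset] at *
  refine ⟨fix_inv p hσ.1, fun q => ?_⟩
  conv_rhs => rw [← σ.apply_symm_apply q]
  rw [hσ.2 (σ.symm q)]; rfl

lemma inv_mem_Cset {σ : Equiv.Perm (Fin n)} (hσ : σ ∈ Cset T p) : σ⁻¹ ∈ Cset T p := by
  rw [mem_Cset] at *
  refine ⟨fix_inv p hσ.1, fun q => ?_⟩
  conv_rhs => rw [← σ.apply_symm_apply q]
  rw [hσ.2 (σ.symm q)]; rfl

lemma eq_one_of_mem_Rset_Cset {σ : Equiv.Perm (Fin n)} (hR : σ ∈ Rset T p)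
    (hC : σ ∈ Cset T p) : σ = 1 := by
  rw [mem_Rset] at hR; rw [mem_Cset] at hC
  apply Equiv.ext; intro q
  have : T.pos (σ q) = T.pos q := Prod.ext (hR.2 q) (hC.2 q)
  simpa using T.inj this

noncomputable def aElt : MonoidAlgebra ℂ (Equiv.Perm (Fin n)) :=
  ∑ σ ∈ Rset T p, MonoidAlgebra.of ℂ (Equiv.Perm (Fin n)) σ

noncomputable def bElt : MonoidAlgebra ℂ (Equiv.Perm (Fin n)) :=
  ∑ σ ∈ Cset T p, ((Equiv.Perm.sign σ : ℤ) : ℂ) • MonoidAlgebra.of ℂ (Equiv.Perm (Fin n)) σ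

end JM

namespace JM
open Finset Equiv Equiv.Perm
variable {n : ℕ} (T : StdTableau n) (p : Fin n)

lemma sign_cast_mul_self (γ : Equiv.Perm (Fin n)) (z : ℂ) :
    ((Equiv.Perm.sign γ : ℤ) : ℂ) * (((Equiv.Perm.sign γ : ℤ) : ℂ) * z) = z := by
  rcases Int.units_eq_one_or (Equiv.Perm.sign γ) with h | h <;> simp [h]

lemma of_mul_aElt {ρ : Equiv.Perm (Fin n)} (hρ : ρ ∈ Rset T p) :
    MonoidAlgebra.of ℂ (Equiv.Perm (Fin n)) ρ * aElt T p = aElt T p := by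
  unfold aElt
  rw [Finset.mul_sum]
  refine Finset.sum_nbij' (fun σ => ρ * σ) (fun σ => ρ⁻¹ * σ)
    (fun σ hσ => mul_mem_Rset T p hρ hσ)
    (fun σ hσ => mul_mem_Rset T p (inv_mem_Rset T p hρ) hσ) ?_ ?_ ?_
  · intro a _; simp [← mul_assoc]
  · intro a _; simp [← mul_assoc]
  · intro a _; rw [← map_mul]

lemma aElt_mul_of {ρ : Equiv.Perm (Fin n)} (hρ : ρ ∈ Rset T p) :
    aElt T p * MonoidAlgebra.of ℂ (Equiv.Perm (Fin n)) ρ = aElt T p := by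
  unfold aElt
  rw [Finset.sum_mul]
  refine Finset.sum_nbij' (fun σ => σ * ρ) (fun σ => σ * ρ⁻¹)
    (fun σ hσ => mul_mem_Rset T p hσ hρ)
    (fun σ hσ => mul_mem_Rset T p hσ (inv_mem_Rset T p hρ)) ?_ ?_ ?_
  · intro a _; simp [mul_assoc]
  · intro a _; simp [mul_assoc]
  · intro a _; rw [← map_mul]

lemma of_mul_bElt {γ : Equiv.Perm (Fin n)} (hγ : γ ∈ Cset T p) :
    MonoidAlgebra.of ℂ (Equiv.Perm (Fin n)) γ * bElt T p
      = ((Equiv.Perm.sign γ : ℤ) : ℂ) • bElt T p := by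
  unfold bElt
  rw [Finset.mul_sum, Finset.smul_sum]
  refine Finset.sum_nbij' (fun σ => γ * σ) (fun σ => γ⁻¹ * σ)
    (fun σ hσ => mul_mem_Cset T p hγ hσ)
    (fun σ hσ => mul_mem_Cset T p (inv_mem_Cset T p hγ) hσ) ?_ ?_ ?_
  · intro a _; simp [← mul_assoc]
  · intro a _; simp [← mul_assoc]
  · intro a _
    congr 1
    rw [map_mul]
    rcases Int.units_eq_one_or (Equiv.Perm.sign γ) with h | h <;> simp [h]

lemma bElt_mul_of {γ : Equiv.Perm (Fin n)} (hγ : γ ∈ Cset T p) :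
    bElt T p * MonoidAlgebra.of ℂ (Equiv.Perm (Fin n)) γ
      = ((Equiv.Perm.sign γ : ℤ) : ℂ) • bElt T p := by
  unfold bElt
  rw [Finset.sum_mul, Finset.smul_sum]
  refine Finset.sum_nbij' (fun σ => σ * γ) (fun σ => σ * γ⁻¹)
    (fun σ hσ => mul_mem_Cset T p hσ hγ)
    (fun σ hσ => mul_mem_Cset T p hσ (inv_mem_Cset T p hγ)) ?_ ?_ ?_
  · intro a _; simp [mul_assoc]
  · intro a _; simp [mul_assoc]
  · intro a _
    congr 1
    rw [map_mul]
    rcases Int.units_eq_one_or (Equiv.Perm.sign γ) with h | h <;> simp [h, mul_comm]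

def Tpairs : Finset (Fin n × Fin n) :=
  Finset.univ.filter (fun x : Fin n × Fin n => x.1 < x.2 ∧ x.2 ≤ p)

lemma mem_Tpairs {x : Fin n × Fin n} : x ∈ Tpairs p ↔ x.1 < x.2 ∧ x.2 ≤ p := by
  simp [Tpairs]

noncomputable def ZElt : MonoidAlgebra ℂ (Equiv.Perm (Fin n)) :=
  ∑ t ∈ Tpairs p, MonoidAlgebra.of ℂ (Equiv.Perm (Fin n)) (Equiv.swap t.1 t.2)

def sortp (x : Fin n × Fin n) : Fin n × Fin n := if x.1 < x.2 then x else (x.2, x.1)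

lemma sortp_spec {x : Fin n × Fin n} (h : x.1 ≠ x.2) :
    (sortp x).1 < (sortp x).2 ∧ Equiv.swap (sortp x).1 (sortp x).2 = Equiv.swap x.1 x.2 ∧
      ((sortp x).1 = x.1 ∧ (sortp x).2 = x.2 ∨ (sortp x).1 = x.2 ∧ (sortp x).2 = x.1) := by
  unfold sortp
  rcases lt_or_gt_of_ne h with hlt | hgt
  · rw [if_pos hlt]; exact ⟨hlt, rfl, Or.inl ⟨rfl, rfl⟩⟩
  · rw [if_neg (not_lt.mpr hgt.le)]
    exact ⟨hgt, Equiv.swap_comm _ _, Or.inr ⟨rfl, rfl⟩⟩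

lemma sortp_inv (σ : Equiv.Perm (Fin n)) {t : Fin n × Fin n} (ht : t.1 < t.2) :
    sortp (σ⁻¹ (sortp (σ t.1, σ t.2)).1, σ⁻¹ (sortp (σ t.1, σ t.2)).2) = t := by
  have hne : (σ t.1 : Fin n) ≠ σ t.2 := fun hc => (ne_of_lt ht) (σ.injective hc)
  obtain ⟨h1, h2, h3⟩ := sortp_spec (x := (σ t.1, σ t.2)) hne
  rcases h3 with ⟨ha, hb⟩ | ⟨ha, hb⟩ <;> rw [ha, hb] <;>
    simp only [← Equiv.Perm.mul_apply, inv_mul_cancel, Equiv.Perm.one_apply] <;> unfold sortp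
  · rw [if_pos ht]
  · rw [if_neg (not_lt.mpr ht.le)]

lemma Z_comm {σ : Equiv.Perm (Fin n)} (hσ : ∀ q, p < q → σ q = q) :
    ZElt p * MonoidAlgebra.of ℂ (Equiv.Perm (Fin n)) σ
      = MonoidAlgebra.of ℂ (Equiv.Perm (Fin n)) σ * ZElt p := by
  unfold ZElt
  rw [Finset.sum_mul, Finset.mul_sum]
  have key : ∀ t ∈ Tpairs p,
      MonoidAlgebra.of ℂ (Equiv.Perm (Fin n)) σ
          * MonoidAlgebra.of ℂ (Equiv.Perm (Fin n)) (Equiv.swap t.1 t.2)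
        = MonoidAlgebra.of ℂ (Equiv.Perm (Fin n)) (Equiv.swap (σ t.1) (σ t.2))
          * MonoidAlgebra.of ℂ (Equiv.Perm (Fin n)) σ := by
    intro t _
    rw [← map_mul, ← map_mul, Equiv.mul_swap_eq_swap_mul]
  rw [Finset.sum_congr rfl key]
  have hle : ∀ {q : Fin n}, q ≤ p → σ q ≤ p := fun hq =>
    not_lt.mp (fix_le p hσ (not_lt.mpr hq))
  have hle' : ∀ {q : Fin n}, q ≤ p → σ⁻¹ q ≤ p := fun hq =>
    not_lt.mp (fix_le p (fix_inv p hσ) (not_lt.mpr hq))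
  have hmem : ∀ (τ : Equiv.Perm (Fin n)), (∀ {q : Fin n}, q ≤ p → τ q ≤ p) →
      ∀ t ∈ Tpairs p, sortp (τ t.1, τ t.2) ∈ Tpairs p := by
    intro τ hτ t ht
    rw [mem_Tpairs] at ht ⊢
    obtain ⟨h1, h2, h3⟩ := sortp_spec (x := (τ t.1, τ t.2))
      (fun hc => (ne_of_lt ht.1) (τ.injective hc))
    refine ⟨h1, ?_⟩
    rcases h3 with ⟨-, h⟩ | ⟨-, h⟩ <;> rw [h]
    · exact hτ ht.2
    · exact hτ (le_of_lt (lt_of_lt_of_le ht.1 ht.2))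
  refine (Finset.sum_nbij' (fun t => sortp (σ t.1, σ t.2)) (fun t => sortp (σ⁻¹ t.1, σ⁻¹ t.2))
    (hmem σ (fun h => hle h)) (hmem σ⁻¹ (fun h => hle' h)) ?_ ?_ ?_).symm
  · intro t ht
    exact sortp_inv σ ((mem_Tpairs p).mp ht).1
  · intro t ht
    have := sortp_inv σ⁻¹ ((mem_Tpairs p).mp ht).1
    simpa using this
  · intro t ht
    obtain ⟨h1, h2, h3⟩ := sortp_spec (x := (σ t.1, σ t.2))
      (fun hc => (ne_of_lt ((mem_Tpairs p).mp ht).1) (σ.injective hc))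
    rw [h2]
end JM
namespace JM
open Finset Equiv Equiv.Perm
variable {n : ℕ} (T : StdTableau n) (p : Fin n)

lemma lower_eq_range (S : Finset ℕ) (h : ∀ r ∈ S, ∀ r' < r, r' ∈ S) :
    S = Finset.range S.card := by
  have hsub : Finset.range S.card ⊆ S := by
    intro m hm
    rw [Finset.mem_range] at hm
    by_contra hmS
    have hSr : S ⊆ Finset.range m := by
      intro x hx
      rw [Finset.mem_range]
      by_contra hxm
      push_neg at hxm
      rcases lt_or_eq_of_le hxm with hlt | heq
      · exact hmS (h x hx m hlt)
      · exact hmS (heq ▸ hx)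
    have := Finset.card_le_card hSr
    rw [Finset.card_range] at this
    omega
  exact (Finset.eq_of_subset_of_card_le hsub (by rw [Finset.card_range])).symm

variable {σ : Equiv.Perm (Fin n)}

lemma colset_eq (hσ : ∀ q, p < q → σ q = q)
    (Hyp : ∀ u v, ¬ p < u → ¬ p < v → (T.pos u).2 = (T.pos v).2 →
      (T.pos (σ u)).1 = (T.pos (σ v)).1 → u = v) :
    ∀ k : ℕ,
      (Finset.univ.filter (fun q : Fin n => ¬ p < q ∧ (T.pos (σ q)).1 = k)).image
          (fun q => (T.pos q).2)
        = (Finset.univ.filter (fun q : Fin n => ¬ p < q ∧ (T.pos q).1 = k)).image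
          (fun q => (T.pos q).2) := by
  intro k
  induction k using Nat.strong_induction_on with
  | _ k IH =>
  set Ek := Finset.univ.filter (fun q : Fin n => ¬ p < q ∧ (T.pos (σ q)).1 = k) with hEk
  set rowk := Finset.univ.filter (fun q : Fin n => ¬ p < q ∧ (T.pos q).1 = k) with hrowk
  have hcard : Ek.card = rowk.card := by
    refine Finset.card_bij (fun q _ => σ q) ?_ ?_ ?_
    · intro q hq
      rw [hEk, Finset.mem_filter] at hq
      rw [hrowk, Finset.mem_filter]
      exact ⟨Finset.mem_univ _, fix_le p hσ hq.2.1, hq.2.2⟩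
    · intro q1 h1 q2 h2 heq
      exact σ.injective heq
    · intro r hr
      rw [hrowk, Finset.mem_filter] at hr
      refine ⟨σ⁻¹ r, ?_, by simp⟩
      rw [hEk, Finset.mem_filter]
      refine ⟨Finset.mem_univ _, fix_le p (fix_inv p hσ) hr.2.1, by simp [hr.2.2]⟩
  have hinjE : Set.InjOn (fun q => (T.pos q).2) Ek := by
    intro u hu v hv heq
    simp only [hEk, Finset.coe_filter, Set.mem_setOf_eq] at hu hv
    exact Hyp u v hu.2.1 hv.2.1 heq (hu.2.2.trans hv.2.2.symm)
  have hinjR : Set.InjOn (fun q => (T.pos q).2) rowk := by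
    intro u hu v hv heq
    simp only [hrowk, Finset.coe_filter, Set.mem_setOf_eq] at hu hv
    exact T.inj (Prod.ext (hu.2.2.trans hv.2.2.symm) heq)
  have hsub : Ek.image (fun q => (T.pos q).2) ⊆ rowk.image (fun q => (T.pos q).2) := by
    intro j hj
    rw [Finset.mem_image] at hj
    obtain ⟨q, hq, hqj⟩ := hj
    rw [hEk, Finset.mem_filter] at hq
    set Colj := Finset.univ.filter (fun x : Fin n => ¬ p < x ∧ (T.pos x).2 = j) with hColj
    have hrowinj : Set.InjOn (fun x => (T.pos x).1) Colj := by
      intro u hu v hv heq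
      simp only [hColj, Finset.coe_filter, Set.mem_setOf_eq] at hu hv
      exact T.inj (Prod.ext heq (hu.2.2.trans hv.2.2.symm))
    have hlower : ∀ r ∈ Colj.image (fun x => (T.pos x).1), ∀ r' < r,
        r' ∈ Colj.image (fun x => (T.pos x).1) := by
      intro r hr r' hr'
      rw [Finset.mem_image] at hr ⊢
      obtain ⟨x, hx, hxr⟩ := hr
      rw [hColj, Finset.mem_filter] at hx
      obtain ⟨y, hy1, hy2⟩ := exists_entry_le T hx.2.1 (i := r') (j := j)
        (by rw [hxr]; exact hr'.le) (le_of_eq hx.2.2.symm)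
      refine ⟨y, ?_, by rw [hy2]⟩
      rw [hColj, Finset.mem_filter]
      exact ⟨Finset.mem_univ _, hy1, by rw [hy2]⟩
    have hrows : Colj.image (fun x => (T.pos x).1) = Finset.range Colj.card := by
      rw [lower_eq_range _ hlower, Finset.card_image_of_injOn hrowinj]
    have hk : k < Colj.card := by
      by_contra hcon
      push_neg at hcon
      have hsrowinj : Set.InjOn (fun x => (T.pos (σ x)).1) Colj := by
        intro u hu v hv heq
        simp only [hColj, Finset.coe_filter, Set.mem_setOf_eq] at hu hv
        exact Hyp u v hu.2.1 hv.2.1 (hu.2.2.trans hv.2.2.symm) heq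
      have hins : insert k (Finset.range Colj.card) ⊆
          Colj.image (fun x => (T.pos (σ x)).1) := by
        intro k' hk'
        rw [Finset.mem_insert] at hk'
        rw [Finset.mem_image]
        rcases hk' with rfl | hk'
        · refine ⟨q, ?_, hq.2.2⟩
          rw [hColj, Finset.mem_filter]
          exact ⟨Finset.mem_univ _, hq.2.1, hqj⟩
        · rw [Finset.mem_range] at hk'
          have hk'k : k' < k := lt_of_lt_of_le hk' hcon
          have : k' ∈ Colj.image (fun x => (T.pos x).1) := by
            rw [hrows, Finset.mem_range]; exact hk'
          rw [Finset.mem_image] at this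
          obtain ⟨x, hx, hxk'⟩ := this
          rw [hColj, Finset.mem_filter] at hx
          have hjrow : j ∈ (Finset.univ.filter
              (fun q : Fin n => ¬ p < q ∧ (T.pos q).1 = k')).image (fun q => (T.pos q).2) := by
            rw [Finset.mem_image]
            exact ⟨x, by rw [Finset.mem_filter]; exact ⟨Finset.mem_univ _, hx.2.1, hxk'⟩, hx.2.2⟩
          rw [← IH k' hk'k, Finset.mem_image] at hjrow
          obtain ⟨q', hq', hq'j⟩ := hjrow
          rw [Finset.mem_filter] at hq'
          refine ⟨q', ?_, hq'.2.2⟩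
          rw [hColj, Finset.mem_filter]
          exact ⟨Finset.mem_univ _, hq'.2.1, hq'j⟩
      have hc1 := Finset.card_le_card hins
      have hc2 := Finset.card_image_le (s := Colj) (f := fun x => (T.pos (σ x)).1)
      rw [Finset.card_insert_of_notMem (by rw [Finset.mem_range]; omega),
        Finset.card_range] at hc1
      omega
    have : k ∈ Colj.image (fun x => (T.pos x).1) := by
      rw [hrows, Finset.mem_range]; exact hk
    rw [Finset.mem_image] at this
    obtain ⟨x, hx, hxk⟩ := this
    rw [hColj, Finset.mem_filter] at hx
    rw [Finset.mem_image]
    refine ⟨x, ?_, hx.2.2⟩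
    rw [hrowk, Finset.mem_filter]
    exact ⟨Finset.mem_univ _, hx.2.1, hxk⟩
  refine Finset.eq_of_subset_of_card_le hsub ?_
  rw [Finset.card_image_of_injOn hinjE, Finset.card_image_of_injOn hinjR, hcard]

lemma lemmaA (hσ : ∀ q, p < q → σ q = q) :
    (∃ ρ ∈ Rset T p, ∃ γ ∈ Cset T p, σ = ρ * γ) ∨
    (∃ u v : Fin n, u ≠ v ∧ ¬ p < u ∧ ¬ p < v ∧ (T.pos u).2 = (T.pos v).2 ∧
      (T.pos (σ u)).1 = (T.pos (σ v)).1) := by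
  by_cases Hyp : ∀ u v, ¬ p < u → ¬ p < v → (T.pos u).2 = (T.pos v).2 →
      (T.pos (σ u)).1 = (T.pos (σ v)).1 → u = v
  swap
  · push_neg at Hyp
    obtain ⟨u, v, h1, h2, h3, h4, h5⟩ := Hyp
    exact Or.inr ⟨u, v, h5, not_lt.mpr h1, not_lt.mpr h2, h3, h4⟩
  left
  have hex : ∀ q, ¬ p < q → ∃ x, ¬ p < x ∧ T.pos x = ((T.pos (σ q)).1, (T.pos q).2) := by
    intro q hq
    have hkey := colset_eq T p hσ Hyp (T.pos (σ q)).1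
    have hmem : (T.pos q).2 ∈ (Finset.univ.filter
        (fun q' : Fin n => ¬ p < q' ∧ (T.pos (σ q')).1 = (T.pos (σ q)).1)).image
          (fun q' => (T.pos q').2) := by
      rw [Finset.mem_image]
      exact ⟨q, by rw [Finset.mem_filter]; exact ⟨Finset.mem_univ _, hq, rfl⟩, rfl⟩
    rw [hkey, Finset.mem_image] at hmem
    obtain ⟨x, hx, hxcol⟩ := hmem
    rw [Finset.mem_filter] at hx
    exact ⟨x, hx.2.1, Prod.ext hx.2.2 hxcol⟩
  choose g hg1 hg2 using hex
  classical
  set gg : Fin n → Fin n := fun q => if h : p < q then q else g q h with hgg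
  have hggle : ∀ q (h : ¬ p < q), gg q = g q h := by
    intro q h; rw [hgg]; simp [h]
  have hgginj : Function.Injective gg := by
    intro q1 q2 heq
    by_cases h1 : p < q1 <;> by_cases h2 : p < q2
    · rw [hgg] at heq; simpa [h1, h2] using heq
    · rw [hggle q2 h2] at heq
      rw [hgg] at heq; simp only [dif_pos h1] at heq
      exact absurd (heq ▸ h1) (hg1 q2 h2)
    · rw [hggle q1 h1] at heq
      rw [hgg] at heq; simp only [dif_pos h2] at heq
      exact absurd (heq ▸ h2) (hg1 q1 h1)
    · rw [hggle q1 h1, hggle q2 h2] at heq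
      have hpos : T.pos (g q1 h1) = T.pos (g q2 h2) := by rw [heq]
      rw [hg2 q1 h1, hg2 q2 h2, Prod.ext_iff] at hpos
      exact Hyp q1 q2 h1 h2 hpos.2 hpos.1
  let γ : Equiv.Perm (Fin n) := Equiv.ofBijective gg (Finite.injective_iff_bijective.mp hgginj)
  have hγapp : ∀ q, γ q = gg q := fun q => rfl
  have hγfix : ∀ q, p < q → γ q = q := by
    intro q hq; rw [hγapp, hgg]; simp [hq]
  have hγC : γ ∈ Cset T p := by
    rw [mem_Cset]
    refine ⟨hγfix, fun q => ?_⟩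
    by_cases h : p < q
    · rw [hγfix q h]
    · rw [hγapp, hggle q h, hg2 q h]
  refine ⟨σ * γ⁻¹, ?_, γ, hγC, by rw [mul_assoc, inv_mul_cancel, mul_one]⟩
  rw [mem_Rset]
  constructor
  · intro q hq
    have hfix : γ⁻¹ q = q := by
      rw [Equiv.Perm.inv_eq_iff_eq]
      exact (hγfix q hq).symm
    rw [Equiv.Perm.mul_apply, hfix, hσ q hq]
  · intro q
    have hq : γ (γ⁻¹ q) = q := γ.apply_symm_apply q
    by_cases h : p < γ⁻¹ q
    · have h2 : γ (γ⁻¹ q) = γ⁻¹ q := hγfix _ h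
      have h3 : γ⁻¹ q = q := h2.symm.trans hq
      rw [Equiv.Perm.mul_apply, h3, hσ q (h3 ▸ h)]
    · have h5 : γ (γ⁻¹ q) = g (γ⁻¹ q) h := (hγapp _).trans (hggle _ h)
      rw [hq] at h5
      have h6 := hg2 (γ⁻¹ q) h
      rw [← h5] at h6
      rw [Equiv.Perm.mul_apply, h6]
end JM
namespace JM
open Finset Equiv Equiv.Perm
variable {n : ℕ} (T : StdTableau n) (p : Fin n)

lemma swap_mem_Rset {u v : Fin n} (hu : ¬ p < u) (hv : ¬ p < v)
    (hrow : (T.pos u).1 = (T.pos v).1) : Equiv.swap u v ∈ Rset T p := by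
  rw [mem_Rset]
  constructor
  · intro q hq
    exact Equiv.swap_apply_of_ne_of_ne (fun h => hu (h ▸ hq)) (fun h => hv (h ▸ hq))
  · intro q
    rcases eq_or_ne q u with rfl | hqu
    · rw [Equiv.swap_apply_left, hrow]
    rcases eq_or_ne q v with rfl | hqv
    · rw [Equiv.swap_apply_right, hrow]
    · rw [Equiv.swap_apply_of_ne_of_ne hqu hqv]

lemma swap_mem_Cset {u v : Fin n} (hu : ¬ p < u) (hv : ¬ p < v)
    (hcol : (T.pos u).2 = (T.pos v).2) : Equiv.swap u v ∈ Cset T p := by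
  rw [mem_Cset]
  constructor
  · intro q hq
    exact Equiv.swap_apply_of_ne_of_ne (fun h => hu (h ▸ hq)) (fun h => hv (h ▸ hq))
  · intro q
    rcases eq_or_ne q u with rfl | hqu
    · rw [Equiv.swap_apply_left, hcol]
    rcases eq_or_ne q v with rfl | hqv
    · rw [Equiv.swap_apply_right, hcol]
    · rw [Equiv.swap_apply_of_ne_of_ne hqu hqv]

lemma self_eq_neg_zero {M : Type*} [AddCommGroup M] [Module ℂ M] {x : M}
    (h : x = -x) : x = 0 := by
  have h2 : (2 : ℂ) • x = 0 := by
    rw [two_smul]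
    rw [add_eq_zero_iff_eq_neg]
    exact h
  rcases smul_eq_zero.mp h2 with h | h
  · norm_num at h
  · exact h

/-- vanishing of `a σ b` in the presence of a bad pair -/
lemma pair_vanish_ab {σ : Equiv.Perm (Fin n)} (hσ : ∀ q, p < q → σ q = q)
    {u v : Fin n} (huv : u ≠ v) (hu : ¬ p < u) (hv : ¬ p < v)
    (hcol : (T.pos u).2 = (T.pos v).2) (hrow : (T.pos (σ u)).1 = (T.pos (σ v)).1) :
    aElt T p * MonoidAlgebra.of ℂ (Equiv.Perm (Fin n)) σ * bElt T p = 0 := by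
  set t : Equiv.Perm (Fin n) := Equiv.swap (σ u) (σ v) with htdef
  set t' : Equiv.Perm (Fin n) := Equiv.swap u v with ht'def
  have htR : t ∈ Rset T p := swap_mem_Rset T p (fix_le p hσ hu) (fix_le p hσ hv) hrow
  have ht'C : t' ∈ Cset T p := swap_mem_Cset T p hu hv hcol
  have hswap : σ * t' = t * σ := Equiv.mul_swap_eq_swap_mul σ u v
  have hid : t * (σ * t') = σ := by
    rw [hswap, ← mul_assoc, htdef, Equiv.swap_mul_self, one_mul]
  apply self_eq_neg_zero
  conv_lhs => rw [← hid]
  rw [map_mul, map_mul]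
  simp only [← mul_assoc]
  rw [aElt_mul_of T p htR, mul_assoc, of_mul_bElt T p ht'C, Equiv.Perm.sign_swap huv]
  simp [mul_smul_comm]

/-- vanishing of `b σ a` in the presence of a bad pair -/
lemma pair_vanish_ba {σ : Equiv.Perm (Fin n)} (hσ : ∀ q, p < q → σ q = q)
    {u v : Fin n} (huv : u ≠ v) (hu : ¬ p < u) (hv : ¬ p < v)
    (hcol : (T.pos u).2 = (T.pos v).2)
    (hrow : (T.pos (σ⁻¹ u)).1 = (T.pos (σ⁻¹ v)).1) :
    bElt T p * MonoidAlgebra.of ℂ (Equiv.Perm (Fin n)) σ * aElt T p = 0 := by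
  set t : Equiv.Perm (Fin n) := Equiv.swap (σ⁻¹ u) (σ⁻¹ v) with htdef
  set t' : Equiv.Perm (Fin n) := Equiv.swap u v with ht'def
  have huv' : σ⁻¹ u ≠ σ⁻¹ v := fun h => huv (by simpa using congrArg σ h)
  have htR : t ∈ Rset T p := swap_mem_Rset T p (fix_le p (fix_inv p hσ) hu)
    (fix_le p (fix_inv p hσ) hv) hrow
  have ht'C : t' ∈ Cset T p := swap_mem_Cset T p hu hv hcol
  have hswap : σ * t = t' * σ := by
    have := Equiv.mul_swap_eq_swap_mul σ (σ⁻¹ u) (σ⁻¹ v)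
    simpa [ht'def, htdef] using this
  have hid : (t' * σ) * t = σ := by
    rw [← hswap, mul_assoc, htdef, Equiv.swap_mul_self, mul_one]
  apply self_eq_neg_zero
  conv_lhs => rw [← hid]
  rw [map_mul, map_mul]
  simp only [← mul_assoc]
  rw [bElt_mul_of T p ht'C, Equiv.Perm.sign_swap huv,
    mul_assoc _ (MonoidAlgebra.of ℂ (Equiv.Perm (Fin n)) t) (aElt T p),
    of_mul_aElt T p htR]
  simp [smul_mul_assoc]

/-- mixed transpositions annihilate -/
lemma mixed_vanish {i j : Fin n} (hij : i ≠ j) (hi : ¬ p < i) (hj : ¬ p < j)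
    (hrow : (T.pos i).1 ≠ (T.pos j).1) (hcol : (T.pos i).2 ≠ (T.pos j).2) :
    aElt T p * MonoidAlgebra.of ℂ (Equiv.Perm (Fin n)) (Equiv.swap i j) * bElt T p = 0 := by
  have hfix : ∀ q, p < q → Equiv.swap i j q = q := fun q hq =>
    Equiv.swap_apply_of_ne_of_ne (fun h => hi (h ▸ hq)) (fun h => hj (h ▸ hq))
  rcases lt_or_gt_of_ne hcol with hc | hc
  · -- col i < col j; x at (row j, col i)
    obtain ⟨x, hx1, hx2⟩ := exists_entry_le T hj (i := (T.pos j).1) (j := (T.pos i).2)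
      le_rfl hc.le
    have hxi : x ≠ i := fun h => hrow (by rw [← h, hx2])
    have hxj : x ≠ j := fun h => by rw [h] at hx2; rw [hx2] at hc; simp at hc
    refine pair_vanish_ab T p hfix (Ne.symm hxi) hi hx1 ?_ ?_
    · rw [hx2]
    · rw [Equiv.swap_apply_left, Equiv.swap_apply_of_ne_of_ne hxi hxj, hx2]
  · -- col j < col i; x at (row i, col j)
    obtain ⟨x, hx1, hx2⟩ := exists_entry_le T hi (i := (T.pos i).1) (j := (T.pos j).2)
      le_rfl hc.le
    have hxj : x ≠ j := fun h => hrow (by rw [← h, hx2])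
    have hxi : x ≠ i := fun h => by rw [h] at hx2; rw [hx2] at hc; simp at hc
    refine pair_vanish_ab T p hfix (Ne.symm hxj) hj hx1 ?_ ?_
    · rw [hx2]
    · rw [Equiv.swap_apply_right, Equiv.swap_apply_of_ne_of_ne hxi hxj, hx2]
end JM
namespace JM
open Finset Equiv Equiv.Perm
variable {n : ℕ} (T : StdTableau n) (p : Fin n)

noncomputable def chi (t : Fin n × Fin n) : ℂ :=
  if (T.pos t.1).1 = (T.pos t.2).1 then 1
  else if (T.pos t.1).2 = (T.pos t.2).2 then -1 else 0

lemma a_swap_b_eq {t : Fin n × Fin n} (ht : t ∈ Tpairs p) :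
    aElt T p * MonoidAlgebra.of ℂ (Equiv.Perm (Fin n)) (Equiv.swap t.1 t.2) * bElt T p
      = chi T t • (aElt T p * bElt T p) := by
  rw [mem_Tpairs] at ht
  have hne : t.1 ≠ t.2 := ne_of_lt ht.1
  have h1 : ¬ p < t.1 := not_lt.mpr (le_of_lt (lt_of_lt_of_le ht.1 ht.2))
  have h2 : ¬ p < t.2 := not_lt.mpr ht.2
  unfold chi
  by_cases hrow : (T.pos t.1).1 = (T.pos t.2).1
  · rw [if_pos hrow, one_smul, aElt_mul_of T p (swap_mem_Rset T p h1 h2 hrow)]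
  by_cases hcol : (T.pos t.1).2 = (T.pos t.2).2
  · rw [if_neg hrow, if_pos hcol, mul_assoc,
      of_mul_bElt T p (swap_mem_Cset T p h1 h2 hcol), Equiv.Perm.sign_swap hne]
    rw [mul_smul_comm]
    norm_num
  · rw [if_neg hrow, if_neg hcol, mixed_vanish T p hne h1 h2 hrow hcol, zero_smul]

lemma aZb : aElt T p * ZElt p * bElt T p
    = (∑ t ∈ Tpairs p, chi T t) • (aElt T p * bElt T p) := by
  rw [ZElt, Finset.mul_sum, Finset.sum_mul, Finset.sum_smul]
  exact Finset.sum_congr rfl (fun t ht => a_swap_b_eq T p ht)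

lemma sum_chi : ∑ t ∈ Tpairs p, chi T t
    = (((Tpairs p).filter (fun t => (T.pos t.1).1 = (T.pos t.2).1)).card : ℂ)
      - (((Tpairs p).filter (fun t => (T.pos t.1).2 = (T.pos t.2).2)).card : ℂ) := by
  have hstep : ∀ t ∈ Tpairs p, chi T t
      = (if (T.pos t.1).1 = (T.pos t.2).1 then (1 : ℂ) else 0)
        - (if (T.pos t.1).2 = (T.pos t.2).2 then (1 : ℂ) else 0) := by
    intro t ht
    rw [mem_Tpairs] at ht
    unfold chi
    by_cases hrow : (T.pos t.1).1 = (T.pos t.2).1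
    · have hcol : ¬ (T.pos t.1).2 = (T.pos t.2).2 := by
        intro hcol
        exact absurd (T.inj (Prod.ext hrow hcol)) (ne_of_lt ht.1)
      rw [if_pos hrow, if_pos hrow, if_neg hcol]
      norm_num
    · by_cases hcol : (T.pos t.1).2 = (T.pos t.2).2 <;>
        simp [hrow, hcol]
  rw [Finset.sum_congr rfl hstep, Finset.sum_sub_distrib, Finset.sum_boole, Finset.sum_boole]

lemma rowPairs_card :
    ((Tpairs p).filter (fun t => (T.pos t.1).1 = (T.pos t.2).1)).card
      = ∑ q ∈ Finset.univ.filter (fun q : Fin n => q ≤ p), (T.pos q).2 := by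
  rw [Finset.card_eq_sum_card_fiberwise (f := fun t => t.2)
    (t := Finset.univ.filter (fun q : Fin n => q ≤ p)) ?_]
  swap
  · intro t ht
    simp only [Finset.coe_filter, Finset.mem_coe, Finset.mem_filter, Set.mem_setOf_eq,
      mem_Tpairs, Finset.mem_univ, true_and] at ht ⊢
    exact ht.1.2
  refine Finset.sum_congr rfl fun q hq => ?_
  rw [Finset.mem_filter] at hq
  have hq' : ¬ p < q := not_lt.mpr hq.2
  rw [← Finset.card_range ((T.pos q).2)]
  refine Finset.card_bij (fun t _ => (T.pos t.1).2) ?_ ?_ ?_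
  · intro t ht
    simp only [Finset.mem_filter, mem_Tpairs] at ht
    obtain ⟨⟨⟨hlt, hle⟩, hrow⟩, ht2⟩ := ht
    simp only [Finset.mem_range]
    subst ht2
    rcases lt_trichotomy ((T.pos t.1).2) ((T.pos t.2).2) with h | h | h
    · exact h
    · exact absurd (T.inj (Prod.ext hrow h)) (ne_of_lt hlt)
    · exact absurd (T.rowInc t.2 t.1 hrow.symm h) (not_lt.mpr hlt.le)
  · intro t ht t' ht'
    simp only [Finset.mem_filter, mem_Tpairs] at ht ht'
    intro heq
    have h2 : t.2 = t'.2 := ht.2.trans ht'.2.symm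
    have hpos : T.pos t.1 = T.pos t'.1 := by
      refine Prod.ext ?_ heq
      rw [ht.1.2, ht'.1.2, h2]
    exact Prod.ext (T.inj hpos) h2
  · intro c hc
    rw [Finset.mem_range] at hc
    obtain ⟨x, hx1, hx2⟩ := exists_entry_le T hq' (i := (T.pos q).1) (j := c) le_rfl hc.le
    have hxq : x < q := T.rowInc x q (by rw [hx2]) (by rw [hx2]; exact hc)
    have hmem : (x, q) ∈ ((Tpairs p).filter
        (fun t => (T.pos t.1).1 = (T.pos t.2).1)).filter (fun a => a.2 = q) := by
      simp only [Finset.mem_filter, mem_Tpairs]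
      exact ⟨⟨⟨hxq, hq.2⟩, by rw [hx2]⟩, trivial⟩
    exact ⟨(x, q), hmem, by simp [hx2]⟩

lemma colPairs_card :
    ((Tpairs p).filter (fun t => (T.pos t.1).2 = (T.pos t.2).2)).card
      = ∑ q ∈ Finset.univ.filter (fun q : Fin n => q ≤ p), (T.pos q).1 := by
  rw [Finset.card_eq_sum_card_fiberwise (f := fun t => t.2)
    (t := Finset.univ.filter (fun q : Fin n => q ≤ p)) ?_]
  swap
  · intro t ht
    simp only [Finset.coe_filter, Finset.mem_coe, Finset.mem_filter, Set.mem_setOf_eq,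
      mem_Tpairs, Finset.mem_univ, true_and] at ht ⊢
    exact ht.1.2
  refine Finset.sum_congr rfl fun q hq => ?_
  rw [Finset.mem_filter] at hq
  have hq' : ¬ p < q := not_lt.mpr hq.2
  rw [← Finset.card_range ((T.pos q).1)]
  refine Finset.card_bij (fun t _ => (T.pos t.1).1) ?_ ?_ ?_
  · intro t ht
    simp only [Finset.mem_filter, mem_Tpairs] at ht
    obtain ⟨⟨⟨hlt, hle⟩, hcol⟩, ht2⟩ := ht
    simp only [Finset.mem_range]
    subst ht2
    rcases lt_trichotomy ((T.pos t.1).1) ((T.pos t.2).1) with h | h | h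
    · exact h
    · exact absurd (T.inj (Prod.ext h hcol)) (ne_of_lt hlt)
    · exact absurd (T.colInc t.2 t.1 hcol.symm h) (not_lt.mpr hlt.le)
  · intro t ht t' ht'
    simp only [Finset.mem_filter, mem_Tpairs] at ht ht'
    intro heq
    have h2 : t.2 = t'.2 := ht.2.trans ht'.2.symm
    have hpos : T.pos t.1 = T.pos t'.1 := by
      refine Prod.ext heq ?_
      rw [ht.1.2, ht'.1.2, h2]
    exact Prod.ext (T.inj hpos) h2
  · intro c hc
    rw [Finset.mem_range] at hc
    obtain ⟨x, hx1, hx2⟩ := exists_entry_le T hq' (i := c) (j := (T.pos q).2) hc.le le_rfl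
    have hxq : x < q := T.colInc x q (by rw [hx2]) (by rw [hx2]; exact hc)
    have hmem : (x, q) ∈ ((Tpairs p).filter
        (fun t => (T.pos t.1).2 = (T.pos t.2).2)).filter (fun a => a.2 = q) := by
      simp only [Finset.mem_filter, mem_Tpairs]
      exact ⟨⟨⟨hxq, hq.2⟩, by rw [hx2]⟩, trivial⟩
    exact ⟨(x, q), hmem, by simp [hx2]⟩
end JM
namespace JM
open Finset Equiv Equiv.Perm
variable {n : ℕ} (T : StdTableau n) (p : Fin n)

lemma bsa_exists {σ : Equiv.Perm (Fin n)} (hσ : ∀ q, p < q → σ q = q) :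
    ∃ z : ℂ, bElt T p * MonoidAlgebra.of ℂ (Equiv.Perm (Fin n)) σ * aElt T p
      = z • (bElt T p * aElt T p) := by
  rcases lemmaA T p (σ := σ⁻¹) (fix_inv p hσ) with ⟨ρ, hρ, γ, hγ, hEq⟩ |
    ⟨u, v, huv, hu, hv, hcol, hrow⟩
  · have hσEq : σ = γ⁻¹ * ρ⁻¹ := by
      rw [← mul_inv_rev, ← hEq, inv_inv]
    refine ⟨((Equiv.Perm.sign γ⁻¹ : ℤ) : ℂ), ?_⟩
    rw [hσEq, map_mul]
    simp only [← mul_assoc]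
    rw [bElt_mul_of T p (inv_mem_Cset T p hγ), smul_mul_assoc, smul_mul_assoc,
      mul_assoc, of_mul_aElt T p (inv_mem_Rset T p hρ)]
  · exact ⟨0, by rw [pair_vanish_ba T p hσ huv hu hv hcol hrow, zero_smul]⟩

lemma mem_H_mul {ρ γ : Equiv.Perm (Fin n)} (hρ : ∀ q, p < q → ρ q = q)
    (hγ : ∀ q, p < q → γ q = q) : ∀ q, p < q → (ρ * γ) q = q := by
  intro q hq
  rw [Equiv.Perm.mul_apply, hγ q hq, hρ q hq]

lemma exists_csq : ∃ θ : ℂ,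
    (bElt T p * aElt T p) * (bElt T p * aElt T p) = θ • (bElt T p * aElt T p) := by
  obtain ⟨zf, hzf⟩ : ∃ zf : Equiv.Perm (Fin n) → ℂ, ∀ σ, (∀ q, p < q → σ q = q) →
      bElt T p * MonoidAlgebra.of ℂ (Equiv.Perm (Fin n)) σ * aElt T p
        = zf σ • (bElt T p * aElt T p) := by
    classical
    refine ⟨fun σ => if h : ∃ z : ℂ, bElt T p * MonoidAlgebra.of ℂ (Equiv.Perm (Fin n)) σ * aElt T p
      = z • (bElt T p * aElt T p) then h.choose else 0, fun σ hσ => ?_⟩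
    have h := bsa_exists T p hσ
    dsimp only
    rw [dif_pos h]
    exact h.choose_spec
  have hab : aElt T p * bElt T p = ∑ ρ ∈ Rset T p, ∑ γ ∈ Cset T p,
      ((Equiv.Perm.sign γ : ℤ) : ℂ) • MonoidAlgebra.of ℂ (Equiv.Perm (Fin n)) (ρ * γ) := by
    rw [aElt, bElt, Finset.sum_mul]
    refine Finset.sum_congr rfl fun ρ _ => ?_
    rw [Finset.mul_sum]
    refine Finset.sum_congr rfl fun γ _ => ?_
    rw [mul_smul_comm, ← map_mul]
  refine ⟨∑ ρ ∈ Rset T p, ∑ γ ∈ Cset T p,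
    ((Equiv.Perm.sign γ : ℤ) : ℂ) * zf (ρ * γ), ?_⟩
  have hassoc : (bElt T p * aElt T p) * (bElt T p * aElt T p)
      = bElt T p * (aElt T p * bElt T p) * aElt T p := by
    simp only [mul_assoc]
  rw [hassoc, hab, Finset.mul_sum, Finset.sum_mul, Finset.sum_smul]
  refine Finset.sum_congr rfl fun ρ hρ => ?_
  rw [Finset.mul_sum, Finset.sum_mul, Finset.sum_smul]
  refine Finset.sum_congr rfl fun γ hγ => ?_
  rw [mul_smul_comm, smul_mul_assoc,
    hzf (ρ * γ) (mem_H_mul p ((mem_Rset T p).mp hρ).1 ((mem_Cset T p).mp hγ).1),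
    smul_smul]

lemma symm_coeff_one : (bElt T p * aElt T p).coeff 1 = 1 := by
  have hba : bElt T p * aElt T p = ∑ γ ∈ Cset T p, ∑ ρ ∈ Rset T p,
      ((Equiv.Perm.sign γ : ℤ) : ℂ) • MonoidAlgebra.of ℂ (Equiv.Perm (Fin n)) (γ * ρ) := by
    rw [aElt, bElt, Finset.sum_mul]
    refine Finset.sum_congr rfl fun γ _ => ?_
    rw [smul_mul_assoc, Finset.mul_sum, Finset.smul_sum]
    refine Finset.sum_congr rfl fun ρ _ => ?_
    rw [← map_mul]
  rw [hba, MonoidAlgebra.coeff_sum, Finset.sum_apply']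
  have hinner : ∀ γ ∈ Cset T p, (∑ ρ ∈ Rset T p,
      ((Equiv.Perm.sign γ : ℤ) : ℂ) • MonoidAlgebra.of ℂ (Equiv.Perm (Fin n)) (γ * ρ)).coeff 1
      = if γ⁻¹ ∈ Rset T p then ((Equiv.Perm.sign γ : ℤ) : ℂ) else 0 := by
    intro γ _
    rw [MonoidAlgebra.coeff_sum, Finset.sum_apply']
    have : ∀ ρ ∈ Rset T p,
        (((Equiv.Perm.sign γ : ℤ) : ℂ) • MonoidAlgebra.of ℂ (Equiv.Perm (Fin n)) (γ * ρ)).coeff 1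
        = if ρ = γ⁻¹ then ((Equiv.Perm.sign γ : ℤ) : ℂ) else 0 := by
      intro ρ _
      rw [MonoidAlgebra.coeff_smul_apply, MonoidAlgebra.of_apply, MonoidAlgebra.coeff_single,
        Finsupp.single_apply]
      by_cases h : ρ = γ⁻¹
      · subst h
        rw [if_pos (by group), if_pos rfl, smul_eq_mul, mul_one]
      · rw [if_neg (fun hc => h (by
            have : γ⁻¹ * (γ * ρ) = γ⁻¹ * 1 := by rw [← hc]
            rwa [← mul_assoc, inv_mul_cancel, one_mul, mul_one] at this)), if_neg h,
          smul_eq_mul, mul_zero]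
    rw [Finset.sum_congr rfl this, Finset.sum_ite_eq' (Rset T p) γ⁻¹
      (fun _ => ((Equiv.Perm.sign γ : ℤ) : ℂ))]
  rw [Finset.sum_congr rfl hinner]
  rw [Finset.sum_eq_single_of_mem 1 (one_mem_Cset T p)]
  · rw [if_pos (by simpa using one_mem_Rset T p)]
    simp
  · intro γ hγ hne
    rw [if_neg]
    intro hmem
    have : γ⁻¹ = 1 := eq_one_of_mem_Rset_Cset T p hmem (inv_mem_Cset T p hγ)
    exact hne (by simpa using congrArg (·⁻¹) this)

lemma theta_ne_zero {θ : ℂ}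
    (hθ : (bElt T p * aElt T p) * (bElt T p * aElt T p) = θ • (bElt T p * aElt T p)) :
    θ ≠ 0 := by
  intro h0
  subst h0
  rw [zero_smul] at hθ
  haveI : Module.Finite ℂ (MonoidAlgebra ℂ (Equiv.Perm (Fin n))) :=
    Module.Finite.of_basis (MonoidAlgebra.basis (Equiv.Perm (Fin n)) ℂ)
  haveI : Module.Free ℂ (MonoidAlgebra ℂ (Equiv.Perm (Fin n))) :=
    Module.Free.of_basis (MonoidAlgebra.basis (Equiv.Perm (Fin n)) ℂ)
  set c := bElt T p * aElt T p with hc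
  set L := LinearMap.mulRight ℂ c with hL
  have hL2 : L ^ 2 = 0 := by
    apply LinearMap.ext
    intro x
    simp only [pow_two, Module.End.mul_apply, hL, LinearMap.mulRight_apply,
      LinearMap.zero_apply]
    rw [mul_assoc, hθ, mul_zero]
  have hnil : IsNilpotent L := ⟨2, hL2⟩
  have htr0 : IsNilpotent (LinearMap.trace ℂ _ L) :=
    LinearMap.isNilpotent_trace_of_isNilpotent hnil
  rw [isNilpotent_iff_eq_zero] at htr0
  set b : Module.Basis (Equiv.Perm (Fin n)) ℂ (MonoidAlgebra ℂ (Equiv.Perm (Fin n))) :=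
    MonoidAlgebra.basis (Equiv.Perm (Fin n)) ℂ with hb
  have htr : LinearMap.trace ℂ (MonoidAlgebra ℂ (Equiv.Perm (Fin n))) L
      = Matrix.trace (LinearMap.toMatrix b b L) :=
    LinearMap.trace_eq_matrix_trace ℂ b L
  rw [Matrix.trace] at htr
  have hdiag : ∀ g : Equiv.Perm (Fin n),
      (LinearMap.toMatrix b b L).diag g = 1 := by
    intro g
    rw [Matrix.diag_apply, LinearMap.toMatrix_apply]
    have hbg : b g = MonoidAlgebra.of ℂ (Equiv.Perm (Fin n)) g := rfl
    rw [hbg]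
    have hLx : L (MonoidAlgebra.of ℂ (Equiv.Perm (Fin n)) g)
        = MonoidAlgebra.of ℂ (Equiv.Perm (Fin n)) g * c := rfl
    rw [hLx]
    have hrepr : ∀ x : MonoidAlgebra ℂ (Equiv.Perm (Fin n)), b.repr x = x.coeff := fun x => rfl
    rw [hrepr]
    have hsm : (MonoidAlgebra.of ℂ (Equiv.Perm (Fin n)) g * c).coeff g = c.coeff 1 := by
      rw [MonoidAlgebra.of_apply, MonoidAlgebra.coeff_single_mul_apply, inv_mul_cancel, one_mul]
    rw [hsm, symm_coeff_one T p]
  rw [Finset.sum_congr rfl (fun g _ => hdiag g)] at htr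
  simp only [Finset.sum_const, Finset.card_univ, nsmul_eq_mul, mul_one] at htr
  rw [htr] at htr0
  have hcard : Fintype.card (Equiv.Perm (Fin n)) = 0 := by exact_mod_cast htr0
  have := Fintype.card_pos (α := Equiv.Perm (Fin n))
  omega
end JM
namespace JM
open Finset Equiv Equiv.Perm
variable {n : ℕ} (T : StdTableau n) (p : Fin n)

lemma Z_mul_aElt : ZElt p * aElt T p = aElt T p * ZElt p := by
  rw [aElt, Finset.mul_sum, Finset.sum_mul]
  exact Finset.sum_congr rfl fun ρ hρ => Z_comm p ((mem_Rset T p).mp hρ).1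

lemma Z_mul_bElt : ZElt p * bElt T p = bElt T p * ZElt p := by
  rw [bElt, Finset.mul_sum, Finset.sum_mul]
  refine Finset.sum_congr rfl fun γ hγ => ?_
  rw [mul_smul_comm, smul_mul_assoc, Z_comm p ((mem_Cset T p).mp hγ).1]

lemma Z_mul_symm :
    ZElt p * (bElt T p * aElt T p)
      = ((∑ q ∈ Finset.univ.filter (fun q : Fin n => q ≤ p), T.content q : ℤ) : ℂ)
          • (bElt T p * aElt T p) := by
  obtain ⟨θ, hθ⟩ := exists_csq T p
  have hθ0 := theta_ne_zero T p hθ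
  set ν := ∑ t ∈ Tpairs p, chi T t with hν
  set c := bElt T p * aElt T p with hc
  have hZc : ZElt p * c = c * ZElt p := by
    rw [hc, ← mul_assoc, Z_mul_bElt, mul_assoc, Z_mul_aElt, ← mul_assoc]
  have key : c * ZElt p * c = ν • (c * c) := by
    have h1 : c * ZElt p * c = bElt T p * (aElt T p * ZElt p * bElt T p) * aElt T p := by
      rw [hc]; simp only [mul_assoc]
    have h2 : bElt T p * (ν • (aElt T p * bElt T p)) * aElt T p = ν • (c * c) := by
      rw [mul_smul_comm, smul_mul_assoc, hc]
      simp only [mul_assoc]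
    rw [h1, aZb T p, ← hν, h2]
  have main : θ • (ZElt p * c) = θ • (ν • c) := by
    calc θ • (ZElt p * c) = ZElt p * (θ • c) := (mul_smul_comm θ _ c).symm
      _ = ZElt p * (c * c) := by rw [← hθ]
      _ = (ZElt p * c) * c := (mul_assoc (ZElt p) c c).symm
      _ = (c * ZElt p) * c := by rw [hZc]
      _ = ν • (c * c) := key
      _ = ν • (θ • c) := by rw [hθ]
      _ = θ • (ν • c) := smul_comm ν θ c
  have hfin : ZElt p * c = ν • c := smul_right_injective _ hθ0 main
  rw [hfin]
  congr 1
  rw [hν, sum_chi T p, rowPairs_card T p, colPairs_card T p]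
  simp only [StdTableau.content]
  push_cast
  rw [Finset.sum_sub_distrib]

lemma Z_mul_symmetrizer :
    ZElt p * T.symmetrizer p
      = ((∑ q ∈ Finset.univ.filter (fun q : Fin n => q ≤ p), T.content q : ℤ) : ℂ)
          • T.symmetrizer p :=
  Z_mul_symm T p

end JM

/-- `w` is a Young basis vector for the standard tableau `T`: it is nonzero and,
for every `p`, it lies in the irreducible `S_p`-isotypic component determined by
the shape of the restriction of `T` to `1,…,p`; the latter is expressed by saying
that `w` lies in the `S_p`-submodule generated by the image of the Young
symmetrizer of the restricted tableau under some `S_p`-equivariant map. -/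
def IsYoungVector {n : ℕ} (T : StdTableau n) {W : Type} [AddCommGroup W] [Module ℂ W]
    (ρ : Representation ℂ (Equiv.Perm (Fin n)) W) (w : W) : Prop :=
  w ≠ 0 ∧ ∀ p : Fin n, ∃ f : MonoidAlgebra ℂ (Equiv.Perm (Fin n)) →ₗ[ℂ] W,
    (∀ σ : Equiv.Perm (Fin n), (∀ q, p < q → σ q = q) →
      ∀ x, f (MonoidAlgebra.of ℂ (Equiv.Perm (Fin n)) σ * x) = ρ σ (f x)) ∧
    w ∈ Submodule.span ℂ {x : W | ∃ σ : Equiv.Perm (Fin n),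
      (∀ q, p < q → σ q = q) ∧ x = ρ σ (f (T.symmetrizer p))}

/-- **Jucys' lemma**: the Jucys–Murphy element `z_p = (1,p)+⋯+(p-1,p)` acts on the
Young basis vector `w_T` of the irreducible `S_n`-module `W_ν` as multiplication by
the content `c_p` of the box of `T` occupied by `p`. -/
theorem jucysMurphy_young_eigenvalue (n : ℕ) (T : StdTableau n)
    (W : Type) [AddCommGroup W] [Module ℂ W]
    (ρ : Representation ℂ (Equiv.Perm (Fin n)) W)
    (hirr : ∀ U : Submodule ℂ W, (∀ σ : Equiv.Perm (Fin n), ∀ x ∈ U, ρ σ x ∈ U) →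
      U = ⊥ ∨ U = ⊤)
    (w : W) (hw : IsYoungVector T ρ w) (p : Fin n) :
    (∑ i ∈ Finset.univ.filter (fun i => i < p), ρ (Equiv.swap i p) w) =
      ((T.content p : ℂ)) • w := by
  classical
  obtain ⟨hw0, hY⟩ := hw
  have claim : ∀ p' : Fin n,
      (∑ t ∈ JM.Tpairs p', ρ (Equiv.swap t.1 t.2) w)
        = ((∑ q ∈ Finset.univ.filter (fun q : Fin n => q ≤ p'), T.content q : ℤ) : ℂ) • w := by
    intro p'
    obtain ⟨f, hf, hspan⟩ := hY p'
    set μ : ℂ := ((∑ q ∈ Finset.univ.filter (fun q : Fin n => q ≤ p'), T.content q : ℤ) : ℂ)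
      with hμ
    have hgen : ∀ x ∈ {x : W | ∃ σ : Equiv.Perm (Fin n),
        (∀ q, p' < q → σ q = q) ∧ x = ρ σ (f (T.symmetrizer p'))},
        (∑ t ∈ JM.Tpairs p', ρ (Equiv.swap t.1 t.2) x) = μ • x := by
      rintro x ⟨σ, hσ, rfl⟩
      have step1 : ∀ t ∈ JM.Tpairs p',
          ρ (Equiv.swap t.1 t.2) (ρ σ (f (T.symmetrizer p')))
            = f (MonoidAlgebra.of ℂ (Equiv.Perm (Fin n)) (Equiv.swap t.1 t.2 * σ)
                * T.symmetrizer p') := by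
        intro t ht
        rw [JM.mem_Tpairs] at ht
        have h1 : ¬ p' < t.1 := not_lt.mpr (le_of_lt (lt_of_lt_of_le ht.1 ht.2))
        have h2 : ¬ p' < t.2 := not_lt.mpr ht.2
        have hfix : ∀ q, p' < q → (Equiv.swap t.1 t.2 * σ) q = q := by
          intro q hq
          rw [Equiv.Perm.mul_apply, hσ q hq]
          exact Equiv.swap_apply_of_ne_of_ne (fun h => h1 (h ▸ hq)) (fun h => h2 (h ▸ hq))
        rw [hf _ hfix, map_mul, Module.End.mul_apply]
      rw [Finset.sum_congr rfl step1]
      have step2 : (∑ t ∈ JM.Tpairs p',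
          f (MonoidAlgebra.of ℂ (Equiv.Perm (Fin n)) (Equiv.swap t.1 t.2 * σ)
            * T.symmetrizer p'))
          = f ((JM.ZElt p' * MonoidAlgebra.of ℂ (Equiv.Perm (Fin n)) σ)
              * T.symmetrizer p') := by
        rw [← map_sum f, ← Finset.sum_mul]
        congr 2
        rw [JM.ZElt, Finset.sum_mul]
        exact Finset.sum_congr rfl fun t _ => map_mul
          (MonoidAlgebra.of ℂ (Equiv.Perm (Fin n))) _ _
      rw [step2, JM.Z_comm p' hσ, mul_assoc, JM.Z_mul_symmetrizer T p', ← hμ,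
        mul_smul_comm, map_smul, hf σ hσ]
    have hspan' : ∀ x ∈ Submodule.span ℂ {x : W | ∃ σ : Equiv.Perm (Fin n),
        (∀ q, p' < q → σ q = q) ∧ x = ρ σ (f (T.symmetrizer p'))},
        (∑ t ∈ JM.Tpairs p', ρ (Equiv.swap t.1 t.2) x) = μ • x := by
      intro x hx
      induction hx using Submodule.span_induction with
      | mem x hxs => exact hgen x hxs
      | zero => simp
      | add x y hx hy ihx ihy =>
        simp only [map_add, Finset.sum_add_distrib, smul_add, ihx, ihy]
      | smul a x hx ih =>
        have hst : ∀ t ∈ JM.Tpairs p',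
            ρ (Equiv.swap t.1 t.2) (a • x) = a • ρ (Equiv.swap t.1 t.2) x :=
          fun t _ => map_smul _ a x
        rw [Finset.sum_congr rfl hst, ← Finset.smul_sum, ih, smul_comm]
    exact hspan' w hspan
  rcases Nat.eq_zero_or_pos p.val with hp0 | hppos
  · have hfilter : Finset.univ.filter (fun i : Fin n => i < p) = ∅ := by
      ext i
      simp only [Finset.mem_filter, Finset.mem_univ, true_and, Finset.notMem_empty,
        iff_false]
      intro h
      rw [Fin.lt_def, hp0] at h
      omega
    rw [hfilter, Finset.sum_empty]
    have hcon : T.content p = 0 := by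
      rw [StdTableau.content, JM.entry_zero T hp0]
      simp
    rw [hcon]
    simp
  · have hm : p.val - 1 < n := by
      have := p.isLt
      omega
    set p' : Fin n := ⟨p.val - 1, hm⟩ with hp'
    have hlt' : ∀ q : Fin n, q ≤ p' ↔ q < p := by
      intro q
      rw [Fin.le_def, Fin.lt_def]
      simp only [hp']
      omega
    have h1 := claim p
    have h2 := claim p'
    have hsplit : JM.Tpairs p = JM.Tpairs p'
        ∪ (Finset.univ.filter (fun i : Fin n => i < p)).image (fun i => (i, p)) := by
      ext t
      simp only [JM.mem_Tpairs, Finset.mem_union, Finset.mem_image, Finset.mem_filter,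
        Finset.mem_univ, true_and]
      constructor
      · rintro ⟨hlt, hle⟩
        rcases eq_or_lt_of_le hle with heq | hlt2
        · exact Or.inr ⟨t.1, heq ▸ hlt, Prod.ext rfl heq.symm⟩
        · exact Or.inl ⟨hlt, (hlt' t.2).mpr hlt2⟩
      · rintro (⟨hlt, hle⟩ | ⟨i, hi, rfl⟩)
        · exact ⟨hlt, le_of_lt ((hlt' t.2).mp hle)⟩
        · exact ⟨hi, le_refl p⟩
    have hdisj : Disjoint (JM.Tpairs p')
        ((Finset.univ.filter (fun i : Fin n => i < p)).image (fun i => (i, p))) := by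
      rw [Finset.disjoint_left]
      intro t ht hmem
      rw [JM.mem_Tpairs] at ht
      obtain ⟨i, hi, hieq⟩ := Finset.mem_image.mp hmem
      have ht2 : t.2 = p := by rw [← hieq]
      have := (hlt' t.2).mp ht.2
      rw [ht2] at this
      exact lt_irrefl p this
    rw [hsplit, Finset.sum_union hdisj] at h1
    have himg : ∑ t ∈ (Finset.univ.filter (fun i : Fin n => i < p)).image (fun i => (i, p)),
        ρ (Equiv.swap t.1 t.2) w
        = ∑ i ∈ Finset.univ.filter (fun i : Fin n => i < p), ρ (Equiv.swap i p) w := by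
      rw [Finset.sum_image]
      intro i _ j _ hij
      exact (Prod.ext_iff.mp hij).1
    rw [himg, h2] at h1
    have hS := eq_sub_of_add_eq' h1
    rw [hS]
    have hcontent : (∑ q ∈ Finset.univ.filter (fun q : Fin n => q ≤ p), T.content q)
        = (∑ q ∈ Finset.univ.filter (fun q : Fin n => q ≤ p'), T.content q)
          + T.content p := by
      have hins : Finset.univ.filter (fun q : Fin n => q ≤ p)
          = insert p (Finset.univ.filter (fun q : Fin n => q ≤ p')) := by
        ext q
        simp only [Finset.mem_filter, Finset.mem_univ, true_and, Finset.mem_insert]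
        constructor
        · intro h
          rcases eq_or_lt_of_le h with heq | hlt2
          · exact Or.inl heq
          · exact Or.inr ((hlt' q).mpr hlt2)
        · rintro (heq | h)
          · exact le_of_eq heq
          · exact le_of_lt ((hlt' q).mp h)
      have hpnot : p ∉ Finset.univ.filter (fun q : Fin n => q ≤ p') := by
        simp only [Finset.mem_filter, Finset.mem_univ, true_and]
        intro h
        have := (hlt' p).mp h
        exact lt_irrefl p this
      rw [hins, Finset.sum_insert hpnot]
      ring
    rw [← sub_smul]
    congr 1
    rw [hcontent]
    push_cast
    ring
end

section
/- For any partition ν of n into at most N parts and any standard tableau T of shape ν with contents c_1,...,c_n, the element Z_ν(u) of U(g)(u) obtained as the trace (tr^{⊗n} ⊗ id)(F_T(u)) is invariant under the adjoint action of the classical group G on U(g); that is, Z_ν(u) takes values in the ring Z(g) of G-invariants. -/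
set_option synthInstance.maxHeartbeats 1000000
set_option maxHeartbeats 1000000

open MonoidAlgebra Matrix

attribute [local instance 100] LieRing.ofAssociativeRing

/-! Classical Lie algebras `so_N`, `sp_N` inside `gl_N`, basis indexed by a
negation-closed finite set `s ⊂ ℤ`. -/

/-- `F_{ij} = E_{ij} - ε_{ij} E_{-j,-i}`. -/
noncomputable def Fbasis (s : Finset ℤ) (hneg : ∀ i ∈ s, -i ∈ s) (ε : ℤ → ℂ)
    (i j : ↥s) : Matrix ↥s ↥s ℂ :=
  Matrix.single i j 1 -
    (ε i * ε j) • Matrix.single ⟨-(j : ℤ), hneg _ j.2⟩ ⟨-(i : ℤ), hneg _ i.2⟩ 1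

/-- The Lie subalgebra `g ⊂ gl_N` spanned by the `F_{ij}`. -/
noncomputable def gClassical (s : Finset ℤ) (hneg : ∀ i ∈ s, -i ∈ s) (ε : ℤ → ℂ) :
    LieSubalgebra ℂ (Matrix ↥s ↥s ℂ) :=
  LieSubalgebra.lieSpan ℂ _ (Set.range fun p : ↥s × ↥s => Fbasis s hneg ε p.1 p.2)

/-- The universal enveloping algebra `U(g)`. -/
noncomputable abbrev Ucl (s : Finset ℤ) (hneg : ∀ i ∈ s, -i ∈ s) (ε : ℤ → ℂ) : Type :=
  UniversalEnvelopingAlgebra ℂ ↥(gClassical s hneg ε)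

/-- The generator `F_{ij} ∈ U(g)`. -/
noncomputable def Fgen (s : Finset ℤ) (hneg : ∀ i ∈ s, -i ∈ s) (ε : ℤ → ℂ)
    (i j : ↥s) : Ucl s hneg ε :=
  UniversalEnvelopingAlgebra.ι ℂ
    ⟨Fbasis s hneg ε i j, LieSubalgebra.subset_lieSpan ⟨(i, j), rfl⟩⟩

/-- The `G`-invariant bilinear form: `J_{ij} = ⟨e_i, e_j⟩ = δ_{i,-j}` (orthogonal)
or `δ_{i,-j}·sgn i` (symplectic). -/
noncomputable def Jform (s : Finset ℤ) (ε : ℤ → ℂ) : Matrix ↥s ↥s ℂ :=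
  fun i j => if (j : ℤ) = -(i : ℤ) then ε (i : ℤ) else 0

/-- The matrix of `σ ∈ S_n` permuting the tensor factors of `(ℂ^N)^{⊗n}`. -/
noncomputable def permTensorMatrix (s : Finset ℤ) (n : ℕ) (σ : Equiv.Perm (Fin n)) :
    Matrix (Fin n → ↥s) (Fin n → ↥s) ℂ :=
  fun a b => if b = a ∘ σ then 1 else 0

/-- The Young projector `Y_T` on `(ℂ^N)^{⊗n}`, the image of the normalized diagonal
matrix element `Φ_T` of `W_ν` under the permutational action. -/
noncomputable def youngProjector (s : Finset ℤ) (n : ℕ)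
    {W : Type} [NormedAddCommGroup W] [InnerProductSpace ℂ W] [FiniteDimensional ℂ W]
    (ρ : Representation ℂ (Equiv.Perm (Fin n)) W) (w : W) :
    Matrix (Fin n → ↥s) (Fin n → ↥s) ℂ :=
  ((Module.finrank ℂ W : ℂ) / (n.factorial : ℂ)) •
    ∑ σ : Equiv.Perm (Fin n), (inner ℂ w (ρ σ w) : ℂ) • permTensorMatrix s n σ

/-! The element `F_T(u)` and the function `Z_ν(u)`. -/

/-- `Q_{qp} ⊗ 1`: the operator `Q` acting in the tensor positions `q, p`. -/
noncomputable def Qpos (s : Finset ℤ) (hneg : ∀ i ∈ s, -i ∈ s) (ε : ℤ → ℂ)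
    (n : ℕ) (q p : Fin n) :
    Matrix (Fin n → ↥s) (Fin n → ↥s) (Ucl s hneg ε) :=
  fun a b =>
    if (∀ r, r ≠ q → r ≠ p → a r = b r) ∧
        ((a p : ℤ) = -((a q : ℤ))) ∧ ((b p : ℤ) = -((b q : ℤ))) then
      algebraMap ℂ _ (ε (a q) * ε (b q))
    else 0

/-- `F_p(v)`: the element `F(v) = -v - η + Σ E_{ij} ⊗ F_{ji}` acting in the `p`-th
tensor position, as a matrix with entries in `U(g)`. -/
noncomputable def Fpos (s : Finset ℤ) (hneg : ∀ i ∈ s, -i ∈ s) (ε : ℤ → ℂ)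
    (η : ℂ) (n : ℕ) (p : Fin n) (v : ℂ) :
    Matrix (Fin n → ↥s) (Fin n → ↥s) (Ucl s hneg ε) :=
  fun a b =>
    if ∀ r, r ≠ p → a r = b r then
      Fgen s hneg ε (b p) (a p) -
        if a p = b p then algebraMap ℂ _ (v + η) else 0
    else 0

/-- The element `F_T(u)` of `End(ℂ^N)^{⊗n} ⊗ U(g)`. -/
noncomputable def FT (s : Finset ℤ) (hneg : ∀ i ∈ s, -i ∈ s) (ε : ℤ → ℂ) (η : ℂ)
    (n : ℕ) (T : StdTableau n)
    {W : Type} [NormedAddCommGroup W] [InnerProductSpace ℂ W] [FiniteDimensional ℂ W]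
    (ρ : Representation ℂ (Equiv.Perm (Fin n)) W) (w : W) (u : ℂ) :
    Matrix (Fin n → ↥s) (Fin n → ↥s) (Ucl s hneg ε) :=
  (youngProjector s n ρ w).map (algebraMap ℂ (Ucl s hneg ε)) *
    ((List.finRange n).map (fun p =>
      ((1 : Matrix (Fin n → ↥s) (Fin n → ↥s) (Ucl s hneg ε)) +
          (2 * u + (T.content p : ℂ))⁻¹ •
            ∑ q ∈ Finset.univ.filter (fun q => q < p), Qpos s hneg ε n q p) *
        Fpos s hneg ε η n p (u + (T.content p : ℂ)))).prod

/-- `Z_ν(u) = (tr^{⊗n} ⊗ id)(F_T(u)) ∈ U(g)`. -/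
noncomputable def Znu (s : Finset ℤ) (hneg : ∀ i ∈ s, -i ∈ s) (ε : ℤ → ℂ) (η : ℂ)
    (n : ℕ) (T : StdTableau n)
    {W : Type} [NormedAddCommGroup W] [InnerProductSpace ℂ W] [FiniteDimensional ℂ W]
    (ρ : Representation ℂ (Equiv.Perm (Fin n)) W) (w : W) (u : ℂ) :
    Ucl s hneg ε :=
  Matrix.trace (FT s hneg ε η n T ρ w u)

/-!
Let `G = g^{⊗n}` act on `(ℂ^N)^{⊗n}`. As a tensor power, `G` commutes with the permutation
operators, hence with `Y_T`. Since `gᵀ J g = J` and `J Jᵀ = 1`, also `g J gᵀ = J`, so `g ⊗ g` fixes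
the vector of `J` on both sides and `G` commutes with each rank-one operator `Q_{qp}`. Writing
`F_{ij} = E_{ij} - Jᵀ E_{ji} J` and using that conjugation by `g` commutes with `X ↦ X - J⁻¹ Xᵀ J`,
one gets `Σ_c g_{ac} θ(F_{bc}) = Σ_c g_{cb} F_{ca}`, that is `G · θ(F_p(v)) = F_p(v) · G`.
Multiplying out, `θ(F_T(u)) = G⁻¹ F_T(u) G`, and as `G` has scalar entries the trace is unchanged.
-/

open Kronecker

namespace Function

variable {ι m : Type*} [DecidableEq ι]

lemma update_update_eq_of_forall_ne {q p : ι} {b c : ι → m} (hqp : q ≠ p)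
    (h : ∀ r, r ≠ q → r ≠ p → b r = c r) :
    update (update b q (c q)) p (c p) = c := by
  refine update_eq_iff.mpr ⟨rfl, fun r hrp => ?_⟩
  by_cases hrq : r = q
  · subst hrq; simp
  · rw [update_of_ne hrq, h r hrq hrp]

lemma update_update_injective {q p : ι} (hqp : q ≠ p) (b : ι → m) :
    Injective fun jk : m × m => update (update b q jk.1) p jk.2 := by
  intro jk jk' h
  have hp := congrFun h p
  have hq := congrFun h q
  simp only [update_self, update_of_ne hqp] at hp hq
  exact Prod.ext hq hp

end Function

namespace Fintype

variable {ι m R : Type*} [Fintype ι] [DecidableEq ι] [CommMonoid R]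

lemma prod_apply_update (f : ι → m → R) (b : ι → m) (p : ι) (j : m) :
    ∏ r, f r (Function.update b p j r) = f p j * ∏ r ∈ {p}ᶜ, f r (b r) := by
  simp_rw [Function.apply_update f, Finset.prod_update_of_mem (Finset.mem_univ p),
    Finset.compl_eq_univ_sdiff]

lemma prod_apply_update_update (f : ι → m → R) (b : ι → m) {q p : ι} (hqp : q ≠ p) (j k : m) :
    ∏ r, f r (Function.update (Function.update b q j) p k r) =
      f p k * (f q j * ∏ r ∈ {q, p}ᶜ, f r (b r)) := by
  have hq : q ∈ ({p}ᶜ : Finset ι) := by simpa using hqp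
  rw [prod_apply_update]
  simp_rw [Function.apply_update f, Finset.prod_update_of_mem hq]
  congr 3
  ext r
  simp [and_comm]

end Fintype

namespace Matrix

variable (ι : Type*) {m R A : Type*}

def tensorPow [Fintype ι] [CommMonoid R] (g : Matrix m m R) : Matrix (ι → m) (ι → m) R :=
  of fun a b => ∏ r, g (a r) (b r)

variable {ι}

@[simp]
lemma tensorPow_apply [Fintype ι] [CommMonoid R] (g : Matrix m m R) (a b : ι → m) :
    tensorPow ι g a b = ∏ r, g (a r) (b r) := rfl

section CommSemiring
variable [Fintype ι] [CommSemiring R]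

lemma tensorPow_mul [DecidableEq ι] [Fintype m] (g₁ g₂ : Matrix m m R) :
    tensorPow ι g₁ * tensorPow ι g₂ = tensorPow ι (g₁ * g₂) := by
  ext a b
  simp only [tensorPow_apply, Matrix.mul_apply, Finset.prod_univ_sum, Fintype.piFinset_univ,
    Finset.prod_mul_distrib]

@[simp]
lemma tensorPow_one [DecidableEq m] : tensorPow ι (1 : Matrix m m R) = 1 := by
  ext a b
  simp only [tensorPow_apply, one_apply, Fintype.prod_boole, funext_iff]

lemma commute_permMatrix_tensorPow [DecidableEq ι] [Fintype m] [DecidableEq m]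
    (σ : Equiv.Perm ι) (g : Matrix m m R) :
    Commute ((σ.arrowCongr (Equiv.refl m)).toPEquiv.toMatrix : Matrix (ι → m) (ι → m) R)
      (tensorPow ι g) := by
  ext a b
  simp only [PEquiv.toMatrix_toPEquiv_mul, PEquiv.mul_toMatrix_toPEquiv,
    submatrix_apply, tensorPow_apply, Equiv.arrowCongr_apply, Equiv.coe_refl, id,
    Function.comp_apply, Equiv.arrowCongr_symm, Equiv.symm_symm, Equiv.refl_symm]
  exact (Equiv.prod_comp σ fun r => g (a (σ.symm r)) (b r)).symm.trans (by simp)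

end CommSemiring

section Place
variable [Fintype ι] [DecidableEq ι] [DecidableEq m]

def placeAt [Zero A] (p : ι) (X : Matrix m m A) : Matrix (ι → m) (ι → m) A :=
  of fun a b => if ∀ r, r ≠ p → a r = b r then X (a p) (b p) else 0

def placeAt₂ [Zero A] (q p : ι) (X : Matrix (m × m) (m × m) A) :
    Matrix (ι → m) (ι → m) A :=
  of fun a b => if ∀ r, r ≠ q → r ≠ p → a r = b r then X (a q, a p) (b q, b p) else 0

lemma placeAt_map {B : Type*} [Zero A] [Zero B] (f : A → B) (hf : f 0 = 0) (p : ι)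
    (X : Matrix m m A) : (placeAt p X).map f = placeAt p (X.map f) := by
  ext a b
  simp only [placeAt, map_apply, of_apply]
  split_ifs <;> simp [hf]

variable [Fintype m]

section Algebra
variable [CommSemiring R] [Semiring A] [Algebra R A]

lemma tensorPow_map_mul_placeAt_apply (g : Matrix m m R) (p : ι) (X : Matrix m m A)
    (a b : ι → m) :
    ((tensorPow ι g).map (algebraMap R A) * placeAt p X) a b =
      algebraMap R A (∏ r ∈ {p}ᶜ, g (a r) (b r)) *
        (g.map (algebraMap R A) * X) (a p) (b p) := by
  rw [Matrix.mul_apply, Matrix.mul_apply, Finset.mul_sum]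
  symm
  refine Fintype.sum_of_injective (Function.update b p) (Function.update_injective b p) _ _
    (fun c hc => ?_) (fun j => ?_)
  · have hcb : ¬ ∀ r, r ≠ p → c r = b r := fun h =>
      hc ⟨c p, Function.update_eq_iff.mpr ⟨rfl, fun r hr => (h r hr).symm⟩⟩
    simp [placeAt, hcb]
  · simp only [placeAt, of_apply, map_apply, tensorPow_apply, Function.update_self,
      Fintype.prod_apply_update (fun r x => g (a r) x)]
    rw [if_pos fun r hr => Function.update_of_ne hr _ _, mul_comm (g (a p) j), map_mul, mul_assoc]

lemma placeAt_mul_tensorPow_map_apply (g : Matrix m m R) (p : ι) (X : Matrix m m A)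
    (a b : ι → m) :
    (placeAt p X * (tensorPow ι g).map (algebraMap R A)) a b =
      (X * g.map (algebraMap R A)) (a p) (b p) *
        algebraMap R A (∏ r ∈ {p}ᶜ, g (a r) (b r)) := by
  rw [Matrix.mul_apply, Matrix.mul_apply, Finset.sum_mul]
  symm
  refine Fintype.sum_of_injective (Function.update a p) (Function.update_injective a p) _ _
    (fun c hc => ?_) (fun j => ?_)
  · have hac : ¬ ∀ r, r ≠ p → a r = c r := fun h =>
      hc ⟨c p, Function.update_eq_iff.mpr ⟨rfl, h⟩⟩
    simp [placeAt, hac]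
  · simp only [placeAt, of_apply, map_apply, tensorPow_apply, Function.update_self,
      Fintype.prod_apply_update (fun r x => g x (b r))]
    rw [if_pos fun r hr => (Function.update_of_ne hr _ _).symm, map_mul, mul_assoc]

lemma semiconjBy_tensorPow_map_placeAt {g : Matrix m m R} {X Y : Matrix m m A}
    (h : SemiconjBy (g.map (algebraMap R A)) X Y) (p : ι) :
    SemiconjBy ((tensorPow ι g).map (algebraMap R A)) (placeAt p X) (placeAt p Y) := by
  ext a b
  rw [tensorPow_map_mul_placeAt_apply, placeAt_mul_tensorPow_map_apply, h.eq, Algebra.commutes]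

end Algebra

section CommSemiring
variable [CommSemiring R]

lemma tensorPow_mul_placeAt₂_apply (g : Matrix m m R) {q p : ι} (hqp : q ≠ p)
    (X : Matrix (m × m) (m × m) R) (a b : ι → m) :
    (tensorPow ι g * placeAt₂ q p X) a b =
      (∏ r ∈ {q, p}ᶜ, g (a r) (b r)) * ((g ⊗ₖ g) * X) (a q, a p) (b q, b p) := by
  rw [Matrix.mul_apply, Matrix.mul_apply, Finset.mul_sum]
  symm
  refine Fintype.sum_of_injective _ (Function.update_update_injective hqp b) _ _
    (fun c hc => ?_) (fun jk => ?_)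
  · have hcb : ¬ ∀ r, r ≠ q → r ≠ p → c r = b r := fun h =>
      hc ⟨(c q, c p), Function.update_update_eq_of_forall_ne hqp fun r hq hp => (h r hq hp).symm⟩
    simp [placeAt₂, hcb]
  · simp only [placeAt₂, of_apply, tensorPow_apply, Function.update_self,
      Function.update_of_ne hqp, Fintype.prod_apply_update_update (fun r x => g (a r) x) b hqp,
      kroneckerMap_apply]
    rw [if_pos fun r hrq hrp => by rw [Function.update_of_ne hrp, Function.update_of_ne hrq]]
    ring

lemma placeAt₂_mul_tensorPow_apply (g : Matrix m m R) {q p : ι} (hqp : q ≠ p)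
    (X : Matrix (m × m) (m × m) R) (a b : ι → m) :
    (placeAt₂ q p X * tensorPow ι g) a b =
      (∏ r ∈ {q, p}ᶜ, g (a r) (b r)) * (X * (g ⊗ₖ g)) (a q, a p) (b q, b p) := by
  rw [Matrix.mul_apply, Matrix.mul_apply, Finset.mul_sum]
  symm
  refine Fintype.sum_of_injective _ (Function.update_update_injective hqp a) _ _
    (fun c hc => ?_) (fun jk => ?_)
  · have hac : ¬ ∀ r, r ≠ q → r ≠ p → a r = c r := fun h =>
      hc ⟨(c q, c p), Function.update_update_eq_of_forall_ne hqp h⟩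
    simp [placeAt₂, hac]
  · simp only [placeAt₂, of_apply, tensorPow_apply, Function.update_self,
      Function.update_of_ne hqp, Fintype.prod_apply_update_update (fun r x => g x (b r)) a hqp,
      kroneckerMap_apply]
    rw [if_pos fun r hrq hrp => by rw [Function.update_of_ne hrp, Function.update_of_ne hrq]]
    ring

lemma commute_tensorPow_placeAt₂ {g : Matrix m m R} {X : Matrix (m × m) (m × m) R}
    (h : Commute (g ⊗ₖ g) X) {q p : ι} (hqp : q ≠ p) :
    Commute (tensorPow ι g) (placeAt₂ q p X) := by
  ext a b
  rw [tensorPow_mul_placeAt₂_apply g hqp, placeAt₂_mul_tensorPow_apply g hqp, h.eq]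

end CommSemiring

end Place

section Single
variable [Fintype m] [DecidableEq m] [CommSemiring R]

lemma sum_smul_single_eq_single_mul (g : Matrix m m R) (a b : m) :
    ∑ c, g a c • single b c (1 : R) = single b a 1 * g := by
  ext x y
  by_cases hb : b = x <;> simp [single_apply, Matrix.mul_apply, Matrix.sum_apply, hb]

lemma sum_smul_single_eq_mul_single (g : Matrix m m R) (a b : m) :
    ∑ c, g c b • single c a (1 : R) = g * single b a 1 := by
  ext x y
  by_cases ha : a = y <;> simp [single_apply, Matrix.mul_apply, Matrix.sum_apply, ha]

lemma mul_single_one_mul_apply (A B : Matrix m m R) (i j x y : m) :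
    (A * single i j (1 : R) * B) x y = A x i * B j y := by
  rw [single_eq_single_vecMulVec_single, mul_vecMulVec, vecMulVec_mul, mulVec_single_one,
    single_one_vecMul, vecMulVec_apply, col_apply, row_apply]

end Single

lemma commute_kronecker_vecMulVec_vec [Fintype m] [CommSemiring R] {g K : Matrix m m R}
    (h₁ : g * K * gᵀ = K) (h₂ : gᵀ * K * g = K) :
    Commute (g ⊗ₖ g) (vecMulVec (vec K) (vec K)) := by
  rw [Commute, SemiconjBy, mul_vecMulVec, vecMulVec_mul, kronecker_mulVec_vec,
    vec_vecMul_kronecker, h₁, h₂]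

section FormSkewPart
variable [Fintype m] [CommRing R]

/-- For `J * Jᵀ = 1` this is `X ↦ X - J⁻¹ Xᵀ J`. -/
def formSkewPart (J : Matrix m m R) : Matrix m m R →ₗ[R] Matrix m m R where
  toFun X := X - Jᵀ * Xᵀ * J
  map_add' X Y := by
    simp only [transpose_add, Matrix.mul_add, Matrix.add_mul]
    abel
  map_smul' c X := by
    simp [smul_sub]

lemma formSkewPart_apply (J X : Matrix m m R) : formSkewPart J X = X - Jᵀ * Xᵀ * J := rfl

variable [DecidableEq m] {J g : Matrix m m R}

lemma inv_eq_of_transpose_mul_mul_eq (hJ : J * Jᵀ = 1) (hg : gᵀ * J * g = J) :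
    g⁻¹ = Jᵀ * gᵀ * J := by
  refine inv_eq_left_inv ?_
  rw [Matrix.mul_assoc, Matrix.mul_assoc, ← Matrix.mul_assoc gᵀ, hg, mul_eq_one_comm.mp hJ]

lemma mul_inv_of_transpose_mul_mul_eq (hJ : J * Jᵀ = 1) (hg : gᵀ * J * g = J) :
    g * g⁻¹ = 1 := by
  rw [mul_eq_one_comm, inv_eq_of_transpose_mul_mul_eq hJ hg, Matrix.mul_assoc, Matrix.mul_assoc,
    ← Matrix.mul_assoc gᵀ, hg, mul_eq_one_comm.mp hJ]

lemma mul_transpose_mul_transpose_eq (hJ : J * Jᵀ = 1) (hg : gᵀ * J * g = J) :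
    g * Jᵀ * gᵀ = Jᵀ := by
  have h := mul_inv_of_transpose_mul_mul_eq hJ hg
  rw [inv_eq_of_transpose_mul_mul_eq hJ hg, ← Matrix.mul_assoc, ← Matrix.mul_assoc] at h
  calc g * Jᵀ * gᵀ = g * Jᵀ * gᵀ * J * Jᵀ := by rw [Matrix.mul_assoc _ J, hJ, Matrix.mul_one]
    _ = Jᵀ := by rw [h, Matrix.one_mul]

lemma conj_formSkewPart (hJ : J * Jᵀ = 1) (hg : gᵀ * J * g = J) (X : Matrix m m R) :
    g * formSkewPart J X * g⁻¹ = formSkewPart J (g * X * g⁻¹) := by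
  have hJg : J * g⁻¹ = gᵀ * J := by
    rw [inv_eq_of_transpose_mul_mul_eq hJ hg, ← Matrix.mul_assoc, ← Matrix.mul_assoc, hJ,
      Matrix.one_mul]
  have hgJ : g * Jᵀ = Jᵀ * g⁻¹ᵀ := by
    calc g * Jᵀ = g * Jᵀ * (g⁻¹ * g)ᵀ := by
          rw [mul_eq_one_comm.mp (mul_inv_of_transpose_mul_mul_eq hJ hg), transpose_one,
            Matrix.mul_one]
      _ = Jᵀ * g⁻¹ᵀ := by
          rw [transpose_mul, ← Matrix.mul_assoc, mul_transpose_mul_transpose_eq hJ hg]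
  simp only [formSkewPart, LinearMap.coe_mk, AddHom.coe_mk, Matrix.mul_sub, Matrix.sub_mul,
    transpose_mul]
  congr 1
  calc g * (Jᵀ * Xᵀ * J) * g⁻¹ = (g * Jᵀ) * Xᵀ * (J * g⁻¹) := by simp only [Matrix.mul_assoc]
    _ = Jᵀ * (g⁻¹ᵀ * (Xᵀ * gᵀ)) * J := by rw [hgJ, hJg]; simp only [Matrix.mul_assoc]

lemma sum_smul_conj_formSkewPart_single (hJ : J * Jᵀ = 1) (hg : gᵀ * J * g = J) (a b : m) :
    ∑ c, g a c • (g * formSkewPart J (single b c 1) * g⁻¹) =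
      ∑ c, g c b • formSkewPart J (single c a 1) := by
  simp_rw [conj_formSkewPart hJ hg, ← map_smul, ← map_sum, sum_smul_single_eq_mul_single]
  congr 1
  calc ∑ c, g a c • (g * single b c 1 * g⁻¹) = g * (∑ c, g a c • single b c 1) * g⁻¹ := by
        simp only [Finset.mul_sum, Finset.sum_mul, Matrix.mul_smul, Matrix.smul_mul]
    _ = g * single b a 1 := by
        rw [sum_smul_single_eq_single_mul, Matrix.mul_assoc, Matrix.mul_assoc,
          mul_inv_of_transpose_mul_mul_eq hJ hg, Matrix.mul_one]

end FormSkewPart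

section Algebra
variable [CommSemiring R] [Semiring A] [Algebra R A]

lemma map_algebraMap_map {n B : Type*} [Semiring B] [Algebra R B] (φ : A →ₐ[R] B)
    (P : Matrix m n R) : (P.map (algebraMap R A)).map φ = P.map (algebraMap R B) := by
  ext a b
  exact φ.commutes _

lemma trace_map_algebraMap_mul_comm [Fintype m] (P : Matrix m m R) (X : Matrix m m A) :
    (P.map (algebraMap R A) * X).trace = (X * P.map (algebraMap R A)).trace := by
  simp only [trace, diag, Matrix.mul_apply, map_apply]
  rw [Finset.sum_comm]
  simp_rw [Algebra.commutes]

end Algebra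

lemma trace_eq_of_semiconjBy_map [Fintype m] [DecidableEq m] [CommRing R] [Semiring A]
    [Algebra R A] {P Q : Matrix m m R} (hPQ : P * Q = 1) {X Y : Matrix m m A}
    (h : SemiconjBy (P.map (algebraMap R A)) X Y) :
    X.trace = Y.trace := by
  set P' := P.map (algebraMap R A)
  set Q' := Q.map (algebraMap R A)
  have hPQ' : P' * Q' = 1 := by
    rw [← Matrix.map_mul, hPQ, Matrix.map_one _ (map_zero _) (map_one _)]
  have hQP' : Q' * P' = 1 := by
    rw [← Matrix.map_mul, mul_eq_one_comm.mp hPQ, Matrix.map_one _ (map_zero _) (map_one _)]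
  calc X.trace = (X * Q' * P').trace := by rw [Matrix.mul_assoc, hQP', Matrix.mul_one]
    _ = (P' * (X * Q')).trace := (trace_map_algebraMap_mul_comm P _).symm
    _ = Y.trace := by rw [← Matrix.mul_assoc, h.eq, Matrix.mul_assoc, hPQ', Matrix.mul_one]

end Matrix

lemma SemiconjBy.list_prod_map {M ι : Type*} [Monoid M] {a : M} {f g : ι → M}
    (h : ∀ i, SemiconjBy a (f i) (g i)) (l : List ι) :
    SemiconjBy a (l.map f).prod (l.map g).prod := by
  induction l with
  | nil => exact SemiconjBy.one_right a
  | cons i l ih => exact (h i).mul_right ih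

section Classical

variable {s : Finset ℤ} {ε : ℤ → ℂ}

lemma Jform_mul_transpose (hneg : ∀ i ∈ s, -i ∈ s) (hε : ∀ i ∈ s, ε i * ε i = 1) :
    Jform s ε * (Jform s ε)ᵀ = 1 := by
  ext x y
  rw [Matrix.mul_apply, Finset.sum_eq_single ⟨-(x : ℤ), hneg _ x.2⟩]
  · by_cases hxy : x = y
    · subst hxy; simp [Jform, hε _ x.2]
    · have : ¬ (x : ℤ) = y := fun h => hxy (Subtype.ext h)
      simp [Jform, hxy, this]
  · intro z _ hz
    have : ¬ (z : ℤ) = -(x : ℤ) := fun h => hz (Subtype.ext h)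
    simp [Jform, this]
  · simp

lemma Fbasis_eq_formSkewPart (hneg : ∀ i ∈ s, -i ∈ s) (i j : ↥s) :
    Fbasis s hneg ε i j = formSkewPart (Jform s ε) (single i j 1) := by
  ext x y
  simp only [Fbasis, formSkewPart_apply, transpose_single, mul_single_one_mul_apply,
    Matrix.sub_apply, Matrix.smul_apply, single_apply, transpose_apply, Jform]
  congr 1
  simp only [Subtype.ext_iff, eq_comm (a := (x : ℤ)), eq_comm (a := (y : ℤ)), ite_and,
    smul_eq_mul, mul_one, ite_mul, mul_ite, zero_mul, mul_zero]
  split_ifs <;> ring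

noncomputable def FbasisLie (s : Finset ℤ) (hneg : ∀ i ∈ s, -i ∈ s) (ε : ℤ → ℂ) (i j : ↥s) :
    ↥(gClassical s hneg ε) :=
  ⟨Fbasis s hneg ε i j, LieSubalgebra.subset_lieSpan ⟨(i, j), rfl⟩⟩

@[simp]
lemma coe_FbasisLie (hneg : ∀ i ∈ s, -i ∈ s) (i j : ↥s) :
    (FbasisLie s hneg ε i j : Matrix ↥s ↥s ℂ) = Fbasis s hneg ε i j := rfl

lemma Fgen_eq_ι_FbasisLie (hneg : ∀ i ∈ s, -i ∈ s) (i j : ↥s) :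
    Fgen s hneg ε i j = UniversalEnvelopingAlgebra.ι ℂ (FbasisLie s hneg ε i j) := rfl

noncomputable def Fmatrix (s : Finset ℤ) (hneg : ∀ i ∈ s, -i ∈ s) (ε : ℤ → ℂ) :
    Matrix ↥s ↥s (Ucl s hneg ε) :=
  of fun a b => Fgen s hneg ε b a

lemma Fpos_eq_placeAt (hneg : ∀ i ∈ s, -i ∈ s) (η : ℂ) (n : ℕ) (p : Fin n) (v : ℂ) :
    Fpos s hneg ε η n p v =
      placeAt p (Fmatrix s hneg ε - algebraMap ℂ (Matrix ↥s ↥s (Ucl s hneg ε)) (v + η)) := by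
  ext a b
  simp only [Fpos, placeAt, Fmatrix, Matrix.of_apply, Matrix.sub_apply, algebraMap_matrix_apply]
  congr

lemma Qpos_eq_map_placeAt₂ (hneg : ∀ i ∈ s, -i ∈ s) (n : ℕ) (q p : Fin n) :
    Qpos s hneg ε n q p =
      (placeAt₂ q p (vecMulVec (vec (Jform s ε)ᵀ) (vec (Jform s ε)ᵀ))).map
        (algebraMap ℂ (Ucl s hneg ε)) := by
  ext a b
  simp only [Qpos, placeAt₂, map_apply, Matrix.of_apply, vecMulVec_apply, vec, transpose_apply,
    Jform]
  split_ifs <;> simp_all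

lemma permTensorMatrix_eq (s : Finset ℤ) (n : ℕ) (σ : Equiv.Perm (Fin n)) :
    permTensorMatrix s n σ = (σ.symm.arrowCongr (Equiv.refl ↥s)).toPEquiv.toMatrix := by
  ext a b
  simp only [permTensorMatrix, PEquiv.toMatrix_apply, Equiv.toPEquiv_apply, Option.mem_def,
    Option.some.injEq, eq_comm]
  rfl

lemma commute_tensorPow_youngProjector (g : Matrix ↥s ↥s ℂ) {n : ℕ} {W : Type}
    [NormedAddCommGroup W] [InnerProductSpace ℂ W] [FiniteDimensional ℂ W]
    (ρ : Representation ℂ (Equiv.Perm (Fin n)) W) (w : W) :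
    Commute (tensorPow (Fin n) g) (youngProjector s n ρ w) := by
  refine (Commute.sum_right _ _ _ fun σ _ => ?_).smul_right _
  rw [permTensorMatrix_eq]
  exact ((commute_permMatrix_tensorPow _ g).symm).smul_right _

variable {hneg : ∀ i ∈ s, -i ∈ s} {g : Matrix ↥s ↥s ℂ}
  (hJ : Jform s ε * (Jform s ε)ᵀ = 1) (hg : gᵀ * Jform s ε * g = Jform s ε)
include hJ hg

lemma sum_smul_conj_Fbasis (a b : ↥s) :
    ∑ c, g a c • (g * Fbasis s hneg ε b c * g⁻¹) = ∑ c, g c b • Fbasis s hneg ε c a := by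
  simp_rw [Fbasis_eq_formSkewPart]
  exact sum_smul_conj_formSkewPart_single hJ hg a b

lemma commute_tensorPow_map_Qpos {n : ℕ} {q p : Fin n} (hqp : q ≠ p) :
    Commute ((tensorPow (Fin n) g).map (algebraMap ℂ (Ucl s hneg ε))) (Qpos s hneg ε n q p) := by
  have hgJ : gᵀ * (Jform s ε)ᵀ * g = (Jform s ε)ᵀ := by
    simpa [Matrix.mul_assoc] using congrArg transpose hg
  rw [Qpos_eq_map_placeAt₂]
  exact (commute_tensorPow_placeAt₂ (commute_kronecker_vecMulVec_vec
    (mul_transpose_mul_transpose_eq hJ hg) hgJ) hqp).map (algebraMap ℂ (Ucl s hneg ε)).mapMatrix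

variable {θ : ↥(gClassical s hneg ε) →ₗ⁅ℂ⁆ ↥(gClassical s hneg ε)}
  (hθ : ∀ X : ↥(gClassical s hneg ε), (θ X : Matrix ↥s ↥s ℂ) = g * X * g⁻¹)
  {φ : Ucl s hneg ε →ₐ[ℂ] Ucl s hneg ε}
  (hφ : ∀ X, φ (UniversalEnvelopingAlgebra.ι ℂ X) = UniversalEnvelopingAlgebra.ι ℂ (θ X))
include hθ hφ

lemma semiconjBy_map_Fmatrix :
    SemiconjBy (g.map (algebraMap ℂ (Ucl s hneg ε))) ((Fmatrix s hneg ε).map φ)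
      (Fmatrix s hneg ε) := by
  ext a b
  have key : ∑ c, g a c • θ (FbasisLie s hneg ε b c) = ∑ c, g c b • FbasisLie s hneg ε c a := by
    apply Subtype.ext
    push_cast
    simp_rw [hθ, coe_FbasisLie]
    exact sum_smul_conj_Fbasis hJ hg a b
  calc (g.map (algebraMap ℂ (Ucl s hneg ε)) * (Fmatrix s hneg ε).map φ) a b
      = UniversalEnvelopingAlgebra.ι ℂ (∑ c, g a c • θ (FbasisLie s hneg ε b c)) := by
        simp only [Matrix.mul_apply, map_apply, Fmatrix, Matrix.of_apply, Fgen_eq_ι_FbasisLie, hφ,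
          map_sum, map_smul, Algebra.smul_def]
    _ = UniversalEnvelopingAlgebra.ι ℂ (∑ c, g c b • FbasisLie s hneg ε c a) := by rw [key]
    _ = (Fmatrix s hneg ε * g.map (algebraMap ℂ (Ucl s hneg ε))) a b := by
        simp only [Matrix.mul_apply, map_apply, Fmatrix, Matrix.of_apply, Fgen_eq_ι_FbasisLie,
          map_sum, map_smul, Algebra.smul_def, Algebra.commutes]

lemma semiconjBy_map_Fpos (η : ℂ) {n : ℕ} (p : Fin n) (v : ℂ) :
    SemiconjBy ((tensorPow (Fin n) g).map (algebraMap ℂ (Ucl s hneg ε)))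
      ((Fpos s hneg ε η n p v).map φ) (Fpos s hneg ε η n p v) := by
  rw [Fpos_eq_placeAt, placeAt_map φ (map_zero φ)]
  refine semiconjBy_tensorPow_map_placeAt ?_ p
  rw [← AlgHom.mapMatrix_apply, map_sub, AlgHom.commutes, AlgHom.mapMatrix_apply]
  exact (semiconjBy_map_Fmatrix hJ hg hθ hφ).sub_right (Algebra.commute_algebraMap_right _ _)

lemma semiconjBy_map_FT (η : ℂ) {n : ℕ} (T : StdTableau n) {W : Type}
    [NormedAddCommGroup W] [InnerProductSpace ℂ W] [FiniteDimensional ℂ W]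
    (ρ : Representation ℂ (Equiv.Perm (Fin n)) W) (w : W) (u : ℂ) :
    SemiconjBy ((tensorPow (Fin n) g).map (algebraMap ℂ (Ucl s hneg ε)))
      ((FT s hneg ε η n T ρ w u).map φ) (FT s hneg ε η n T ρ w u) := by
  set G := (tensorPow (Fin n) g).map (algebraMap ℂ (Ucl s hneg ε))
  have hQ : ∀ q p : Fin n, φ.mapMatrix (Qpos s hneg ε n q p) = Qpos s hneg ε n q p :=
    fun q p => by rw [AlgHom.mapMatrix_apply, Qpos_eq_map_placeAt₂, map_algebraMap_map]
  change SemiconjBy G (φ.mapMatrix (_ * _)) _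
  rw [map_mul, map_list_prod, List.map_map]
  refine SemiconjBy.mul_right ?_ (SemiconjBy.list_prod_map (fun p => ?_) _)
  · rw [AlgHom.mapMatrix_apply, map_algebraMap_map]
    exact (commute_tensorPow_youngProjector g ρ w).map (algebraMap ℂ (Ucl s hneg ε)).mapMatrix
  · rw [Function.comp_apply, map_mul, map_add, map_one, map_smul, map_sum]
    simp_rw [hQ]
    refine SemiconjBy.mul_right ?_ (semiconjBy_map_Fpos hJ hg hθ hφ η p _)
    exact (Commute.one_right G).add_right ((Commute.sum_right _ _ _ fun q hq =>
      commute_tensorPow_map_Qpos hJ hg (Finset.mem_filter.mp hq).2.ne).smul_right _)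

end Classical

theorem Znu_adjoint_invariant_general (M : ℕ) (s : Finset ℤ) (ε : ℤ → ℂ) (η : ℂ)
    (hcase :
      (s = Finset.Icc (-(M : ℤ)) M ∧ ε = (fun _ => 1) ∧ η = 1/2) ∨
      (s = (Finset.Icc (-(M : ℤ)) M).erase 0 ∧ ε = (fun _ => 1) ∧ η = 1/2) ∨
      (s = (Finset.Icc (-(M : ℤ)) M).erase 0 ∧ ε = (fun i => (i.sign : ℂ)) ∧ η = -(1/2)))
    (hneg : ∀ i ∈ s, -i ∈ s)
    (n : ℕ) (T : StdTableau n)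
    (W : Type) [NormedAddCommGroup W] [InnerProductSpace ℂ W] [FiniteDimensional ℂ W]
    (ρ : Representation ℂ (Equiv.Perm (Fin n)) W)
    (w : W)
    (g : Matrix ↥s ↥s ℂ) (hg : gᵀ * Jform s ε * g = Jform s ε)
    (θ : ↥(gClassical s hneg ε) →ₗ⁅ℂ⁆ ↥(gClassical s hneg ε))
    (hθ : ∀ X : ↥(gClassical s hneg ε),
      ((θ X : Matrix ↥s ↥s ℂ)) = g * (X : Matrix ↥s ↥s ℂ) * g⁻¹)
    (u : ℂ) :
    (UniversalEnvelopingAlgebra.lift ℂ ((UniversalEnvelopingAlgebra.ι ℂ).comp θ))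
        (Znu s hneg ε η n T ρ w u) =
      Znu s hneg ε η n T ρ w u := by
  have hε : ∀ i ∈ s, ε i * ε i = 1 := by
    rcases hcase with ⟨-, rfl, -⟩ | ⟨-, rfl, -⟩ | ⟨rfl, rfl, -⟩
    · simp
    · simp
    · intro i hi
      rcases (Finset.ne_of_mem_erase hi).lt_or_gt with h | h <;>
        simp [Int.sign_eq_neg_one_of_neg, Int.sign_eq_one_of_pos, h]
  have hJ := Jform_mul_transpose hneg hε
  have hinv : tensorPow (Fin n) g * tensorPow (Fin n) g⁻¹ = 1 := by
    rw [tensorPow_mul, mul_inv_of_transpose_mul_mul_eq hJ hg, tensorPow_one]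
  have hφ : ∀ X, UniversalEnvelopingAlgebra.lift ℂ ((UniversalEnvelopingAlgebra.ι ℂ).comp θ)
      (UniversalEnvelopingAlgebra.ι ℂ X) = UniversalEnvelopingAlgebra.ι ℂ (θ X) :=
    UniversalEnvelopingAlgebra.lift_ι_apply ℂ _
  rw [Znu, AddMonoidHom.map_trace]
  exact trace_eq_of_semiconjBy_map hinv (semiconjBy_map_FT hJ hg hθ hφ η T ρ w u)

/-- **`Z_ν(u)` takes values in the ring `Z(g)` of `G`-invariants** (Proposition 2.5):
for every element `g` of the classical group `G = O_N, Sp_N` and every Lie algebra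
automorphism `θ` of `g` induced by conjugation by `g`, the induced automorphism of
`U(g)` fixes `Z_ν(u)`. -/
theorem Znu_adjoint_invariant (M : ℕ) (s : Finset ℤ) (ε : ℤ → ℂ) (η : ℂ)
    (hcase :
      (s = Finset.Icc (-(M : ℤ)) M ∧ ε = (fun _ => 1) ∧ η = 1/2) ∨
      (s = (Finset.Icc (-(M : ℤ)) M).erase 0 ∧ ε = (fun _ => 1) ∧ η = 1/2) ∨
      (s = (Finset.Icc (-(M : ℤ)) M).erase 0 ∧ ε = (fun i => (i.sign : ℂ)) ∧ η = -(1/2)))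
    (hneg : ∀ i ∈ s, -i ∈ s)
    (n : ℕ) (T : StdTableau n) (hrows : ∀ p, (T.pos p).1 < s.card)
    (W : Type) [NormedAddCommGroup W] [InnerProductSpace ℂ W] [FiniteDimensional ℂ W]
    (ρ : Representation ℂ (Equiv.Perm (Fin n)) W)
    (hirr : ∀ U : Submodule ℂ W, (∀ σ : Equiv.Perm (Fin n), ∀ x ∈ U, ρ σ x ∈ U) →
      U = ⊥ ∨ U = ⊤)
    (hinv : ∀ σ : Equiv.Perm (Fin n), ∀ x y : W,
      (inner ℂ (ρ σ x) (ρ σ y) : ℂ) = inner ℂ x y)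
    (w : W) (hw : IsYoungVector T ρ w) (hnorm : (inner ℂ w w : ℂ) = 1)
    (g : Matrix ↥s ↥s ℂ) (hg : gᵀ * Jform s ε * g = Jform s ε)
    (θ : ↥(gClassical s hneg ε) →ₗ⁅ℂ⁆ ↥(gClassical s hneg ε))
    (hθ : ∀ X : ↥(gClassical s hneg ε),
      ((θ X : Matrix ↥s ↥s ℂ)) = g * (X : Matrix ↥s ↥s ℂ) * g⁻¹)
    (u : ℂ) (hu : ∀ p : Fin n, 2 * u + (T.content p : ℂ) ≠ 0) :
    (UniversalEnvelopingAlgebra.lift ℂ ((UniversalEnvelopingAlgebra.ι ℂ).comp θ))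
        (Znu s hneg ε η n T ρ w u) =
      Znu s hneg ε η n T ρ w u :=
  Znu_adjoint_invariant_general M s ε η hcase hneg n T W ρ w g hg θ hθ u
end

section
/- For partitions λ, ν with at most N parts and |λ| ≤ |ν| = n, the factorial Schur polynomial evaluated at shifted coordinates, s_ν(λ_1+N-1, λ_2+N-2, ..., λ_N | 0,1,2,...), vanishes unless λ = ν, and is nonzero when λ = ν. -/
/-- The generalized factorial power `(u|a)^k = (u - a_1)⋯(u - a_k)` for the
special sequence `a = (0, 1, 2, …)`. -/
noncomputable def genFactPowNat (u : ℂ) (k : ℕ) : ℂ :=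
  ∏ t ∈ Finset.range k, (u - (t : ℂ))

lemma genFactPowNat_cast (m k : ℕ) :
    genFactPowNat (m : ℂ) k = (m.descFactorial k : ℂ) := by
  induction k with
  | zero => simp [genFactPowNat]
  | succ k ih =>
    rw [genFactPowNat, Finset.prod_range_succ, ← genFactPowNat, ih, Nat.descFactorial_succ]
    rcases le_or_gt k m with h | h
    · push_cast [h]; ring
    · rw [Nat.descFactorial_eq_zero_iff_lt.2 h]
      simp

lemma genFactPowNat_eq_eval (u : ℂ) (k : ℕ) :
    genFactPowNat u k = (descPochhammer ℂ k).eval u := by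
  induction k with
  | zero => simp [genFactPowNat]
  | succ k ih =>
    rw [descPochhammer_succ_eval, ← ih, genFactPowNat, Finset.prod_range_succ, ← genFactPowNat]

/-- Sorting lemma: if both sequences are antitone and some permutation dominates,
then the identity dominates. -/
lemma perm_dominate {N : ℕ} {y m : Fin N → ℕ} (hy : Antitone y) (hm : Antitone m)
    (σ : Equiv.Perm (Fin N)) (h : ∀ i, m i ≤ y (σ i)) : ∀ i, m i ≤ y i := by
  intro i
  obtain ⟨j, hj, hij⟩ : ∃ j, j ≤ i ∧ i ≤ σ j := by
    by_contra hc
    push_neg at hc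
    have hmap : ∀ j ∈ Finset.Iic i, σ j ∈ Finset.Iio i := fun j hj =>
      Finset.mem_Iio.2 (hc j (Finset.mem_Iic.1 hj))
    have hcard := Finset.card_le_card_of_injOn σ hmap (σ.injective.injOn)
    rw [Fin.card_Iic, Fin.card_Iio] at hcard
    omega
  exact le_trans (hm hj) (le_trans (h j) (hy hij))

/-- For partitions `λ, ν` with at most `N` parts and `|λ| ≤ |ν| = n`, the factorial
Schur polynomial `s_ν(·|0,1,2,…)` evaluated at the shifted point
`(λ_1 + N - 1, λ_2 + N - 2, …, λ_N)` is nonzero if and only if `λ = ν`. -/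
theorem factorialSchur_vanishing (N n : ℕ) (lam nu : Fin N → ℕ)
    (hlam : Antitone lam) (hnu : Antitone nu)
    (hsum : ∑ i, nu i = n) (hle : ∑ i, lam i ≤ n) :
    (Matrix.det (Matrix.of fun i j : Fin N =>
        genFactPowNat ((lam j : ℂ) + (N : ℂ) - 1 - (j : ℕ)) (nu i + (N - 1 - (i : ℕ)))) /
      Matrix.det (Matrix.of fun i j : Fin N =>
        genFactPowNat ((lam j : ℂ) + (N : ℂ) - 1 - (j : ℕ)) (N - 1 - (i : ℕ))) ≠ 0)
      ↔ lam = nu := by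
  rcases Nat.eq_zero_or_pos N with hN | hN
  · subst hN
    have h1 : lam = nu := funext fun i => absurd i.2 (Nat.not_lt_zero _)
    simp [Matrix.det_isEmpty, h1]
  -- main case
  set y : Fin N → ℕ := fun j => lam j + (N - 1 - (j : ℕ)) with hy_def
  set m : Fin N → ℕ := fun i => nu i + (N - 1 - (i : ℕ)) with hm_def
  have hcast : ∀ j : Fin N, (lam j : ℂ) + (N : ℂ) - 1 - ((j : ℕ) : ℂ) = ((y j : ℕ) : ℂ) := by
    intro j
    have h1 : (j : ℕ) ≤ N - 1 := by have := j.isLt; omega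
    have h2 : 1 ≤ N := hN
    simp only [hy_def]
    push_cast [Nat.cast_sub h1, Nat.cast_sub h2]
    ring
  have hA : (Matrix.of fun i j : Fin N =>
        genFactPowNat ((lam j : ℂ) + (N : ℂ) - 1 - ((j : ℕ) : ℂ)) (nu i + (N - 1 - (i : ℕ)))) =
      Matrix.of fun i j : Fin N => (((y j).descFactorial (m i) : ℕ) : ℂ) := by
    ext i j
    simp only [Matrix.of_apply]
    rw [hcast j, genFactPowNat_cast]
  have hB : (Matrix.of fun i j : Fin N =>
        genFactPowNat ((lam j : ℂ) + (N : ℂ) - 1 - ((j : ℕ) : ℂ)) (N - 1 - (i : ℕ))) =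
      Matrix.of fun i j : Fin N => genFactPowNat ((y j : ℕ) : ℂ) (N - 1 - (i : ℕ)) := by
    ext i j
    simp only [Matrix.of_apply]
    rw [hcast j]
  have hy_anti : StrictAnti y := by
    intro i j hij
    have h1 := hlam hij.le
    have h2 := j.isLt
    have h3 : (i : ℕ) < (j : ℕ) := hij
    simp only [hy_def]
    omega
  have hm_anti : StrictAnti m := by
    intro i j hij
    have h1 := hnu hij.le
    have h2 := j.isLt
    have h3 : (i : ℕ) < (j : ℕ) := hij
    simp only [hm_def]
    omega
  -- denominator is (up to sign) a Vandermonde determinant, hence nonzero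
  have hden : Matrix.det (Matrix.of fun i j : Fin N =>
      genFactPowNat ((y j : ℕ) : ℂ) (N - 1 - (i : ℕ))) ≠ 0 := by
    have hMdet := Matrix.det_eval_matrixOfPolynomials_eq_det_vandermonde
      (fun i : Fin N => ((y i : ℕ) : ℂ)) (fun j : Fin N => descPochhammer ℂ (j : ℕ))
      (fun i => by simp [descPochhammer_natDegree]) (fun i => monic_descPochhammer _ _)
    have hDM : (Matrix.of fun i j : Fin N =>
        genFactPowNat ((y j : ℕ) : ℂ) (N - 1 - (i : ℕ))) =
        ((Matrix.of fun i j : Fin N =>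
          (descPochhammer ℂ (j : ℕ)).eval ((y i : ℕ) : ℂ)).transpose).submatrix
            (Fin.revPerm : Equiv.Perm (Fin N)) id := by
      ext i j
      simp only [Matrix.of_apply, Matrix.submatrix_apply, Matrix.transpose_apply,
        genFactPowNat_eq_eval, id_eq, Fin.revPerm_apply, Fin.val_rev]
      congr 2
      omega
    rw [hDM, Matrix.det_permute, Matrix.det_transpose, ← hMdet]
    have hinj : Function.Injective fun i : Fin N => ((y i : ℕ) : ℂ) := by
      intro a b hab
      exact hy_anti.injective (Nat.cast_injective hab)
    have hvdm := Matrix.det_vandermonde_ne_zero_iff.2 hinj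
    intro hcontra
    rcases mul_eq_zero.1 hcontra with h | h
    · exact absurd h (by
        rcases Int.units_eq_one_or (Equiv.Perm.sign (Fin.revPerm : Equiv.Perm (Fin N))) with
          hs | hs <;> simp [hs])
    · exact hvdm h
  rw [hA, hB, div_ne_zero_iff, and_iff_left hden]
  constructor
  · -- numerator nonzero → lam = nu
    intro hdet
    have hterm : ∃ σ : Equiv.Perm (Fin N), ∀ j, (y j).descFactorial (m (σ j)) ≠ 0 := by
      by_contra hc
      push_neg at hc
      apply hdet
      rw [Matrix.det_apply']
      refine Finset.sum_eq_zero fun σ _ => ?_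
      obtain ⟨j, hj⟩ := hc σ
      have : ∏ i, (Matrix.of fun i j : Fin N => (((y j).descFactorial (m i) : ℕ) : ℂ)) (σ i) i
          = 0 := by
        apply Finset.prod_eq_zero (Finset.mem_univ j)
        simp [hj]
      rw [this, mul_zero]
    obtain ⟨σ, hσ⟩ := hterm
    have hdom : ∀ i, m i ≤ y (σ⁻¹ i) := by
      intro i
      have := hσ (σ⁻¹ i)
      have h1 : ¬ y (σ⁻¹ i) < m (σ (σ⁻¹ i)) := fun hlt =>
        this (Nat.descFactorial_eq_zero_iff_lt.2 hlt)
      simpa using not_lt.1 h1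
    have hmy : ∀ i, m i ≤ y i :=
      perm_dominate hy_anti.antitone hm_anti.antitone σ⁻¹ hdom
    have hsum_le : ∑ i, y i ≤ ∑ i, m i := by
      simp only [hy_def, hm_def, Finset.sum_add_distrib]
      have : ∑ i, nu i = n := hsum
      omega
    have hsums : ∑ i, m i = ∑ i, y i :=
      le_antisymm (Finset.sum_le_sum fun i _ => hmy i) hsum_le
    have heq := (Finset.sum_eq_sum_iff_of_le fun i _ => hmy i).1 hsums
    funext i
    have := heq i (Finset.mem_univ i)
    simp only [hy_def, hm_def] at this
    omega
  · -- lam = nu → numerator nonzero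
    intro h
    subst h
    have hym : y = m := rfl
    rw [hym]
    have htri : (Matrix.of fun i j : Fin N =>
        (((m j).descFactorial (m i) : ℕ) : ℂ)).BlockTriangular OrderDual.toDual := by
      intro i j hij
      have hij' : i < j := hij
      have : m j < m i := hm_anti hij'
      simp [Nat.descFactorial_eq_zero_iff_lt.2 this]
    rw [Matrix.det_of_lowerTriangular _ htri]
    apply Finset.prod_ne_zero_iff.2
    intro i _
    simp [Nat.descFactorial_self, Nat.factorial_ne_zero]
end
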